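/- arXiv:2003.07252 — 7 statements merged into one kernel-verified Lean document; each statement's English description precedes it below -/
import Mathlib

section
/- Let X, Y, Z be Banach spaces, 1 ≤ p < ∞, let U be a closed subspace of X ε Y, and let S : U → Z be an (ℓ^s_p,ℓ_p)-summing operator. Then there exist a constant K ≥ 0 and a measure μ ∈ P(B_{X*}) such that ‖S(T)‖_Z ≤ K (∫_{B_{X*}} ‖T(x*)‖_Y^p dμ(x*))^{1/p} for every T ∈ U. -/
open MeasureTheory Filter Topology

/-- The closed unit ball of the dual of `X`, equipped with the weak* topology. -/
abbrev DualBall (X : Type*) [NormedAddCommGroup X] [NormedSpace ℝ X] : Type _ :=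
  {φ : WeakDual ℝ X // ‖WeakDual.toStrongDual φ‖ ≤ 1}

noncomputable instance (X : Type*) [NormedAddCommGroup X] [NormedSpace ℝ X] :
    MeasurableSpace (DualBall X) := borel _

instance (X : Type*) [NormedAddCommGroup X] [NormedSpace ℝ X] :
    BorelSpace (DualBall X) := ⟨rfl⟩

variable {X Y Z : Type*} [NormedAddCommGroup X] [NormedSpace ℝ X]
  [NormedAddCommGroup Y] [NormedSpace ℝ Y] [NormedAddCommGroup Z] [NormedSpace ℝ Z]

/-- The restriction of an operator `T : X* → Y` to the dual unit ball. -/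
noncomputable def evalBall (T : StrongDual ℝ X →L[ℝ] Y) (φ : DualBall X) : Y :=
  T (WeakDual.toStrongDual φ.1)

/-- `T` belongs to `UM(X*,Y)`: its restriction to the dual ball is universally
strongly measurable. -/
def MemUM (T : StrongDual ℝ X →L[ℝ] Y) : Prop :=
  ∀ (μ : Measure (DualBall X)), IsProbabilityMeasure μ → μ.Regular →
    AEStronglyMeasurable (evalBall T) μ

/-- `T` belongs to the ε-product `X ε Y`: its restriction to the dual ball is
weak*-to-norm continuous. -/
def MemEps (T : StrongDual ℝ X →L[ℝ] Y) : Prop :=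
  Continuous (evalBall T)

/-- `S` is `(ℓ^s_p, ℓ_p)`-summing. -/
def IsLpSumming (p : ℝ) (U : Submodule ℝ (StrongDual ℝ X →L[ℝ] Y))
    (S : U →L[ℝ] Z) : Prop :=
  ∃ K : ℝ, 0 ≤ K ∧ ∀ (n : ℕ) (T : Fin n → U),
    (∑ i, ‖S (T i)‖ ^ p) ^ (1/p) ≤
      K * ⨆ φ : DualBall X, (∑ i, ‖evalBall (T i : StrongDual ℝ X →L[ℝ] Y) φ‖ ^ p) ^ (1/p)

/-- `S` is `(ℓ^s_p, ℓ_p)`-controlled. -/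
def IsLpControlled (p : ℝ) (U : Submodule ℝ (StrongDual ℝ X →L[ℝ] Y))
    (S : U →L[ℝ] Z) : Prop :=
  ∃ K : ℝ, 0 ≤ K ∧ ∃ μ : Measure (DualBall X), IsProbabilityMeasure μ ∧ μ.Regular ∧
    ∀ T : U, ‖S T‖ ≤
      K * (∫ φ, ‖evalBall (T : StrongDual ℝ X →L[ℝ] Y) φ‖ ^ p ∂μ) ^ (1/p)

/-- SOT convergence of a sequence of operators. -/
def SOTConvergesTo (T : ℕ → (StrongDual ℝ X →L[ℝ] Y))
    (T₀ : StrongDual ℝ X →L[ℝ] Y) : Prop :=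
  ∀ x' : StrongDual ℝ X, Tendsto (fun n => ‖T n x' - T₀ x'‖) atTop (𝓝 0)

/-!
Evaluating the summing inequality at a point where the continuous function `∑ ‖Tᵢ(·)‖^p`
attains its maximum on the weak*-compact dual ball shows that every function
`∑ cᵢ (‖S Tᵢ‖^p - K^p ‖Tᵢ(·)‖^p)` with `cᵢ ≥ 0` is nonpositive somewhere (absorb `cᵢ` into
`Tᵢ` as `cᵢ^(1/p) Tᵢ`). These functions form a convex cone in `C(B_{X*})` disjoint from the open
convex set of strictly positive functions, so Hahn–Banach separation gives a positive normalized
functional that is nonpositive on the cone. By Riesz–Markov–Kakutani it is integration against a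
regular probability measure `μ`, and on a single generator this reads
`‖S T‖^p ≤ K^p ∫ ‖T(x*)‖^p dμ`.
-/

open scoped CompactlySupported

theorem Real.le_mul_rpow_inv_iff {a K x p : ℝ} (ha : 0 ≤ a) (hK : 0 ≤ K) (hx : 0 ≤ x)
    (hp : 0 < p) : a ≤ K * x ^ p⁻¹ ↔ a ^ p ≤ K ^ p * x := by
  rw [← Real.rpow_rpow_inv hK hp.ne', ← Real.mul_rpow (by positivity) hx,
    Real.le_rpow_inv_iff_of_pos ha (by positivity) hp, Real.rpow_rpow_inv hK hp.ne']

theorem norm_rpow_inv_smul_rpow {E : Type*} [SeminormedAddCommGroup E] [NormedSpace ℝ E]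
    {c p : ℝ} (hc : 0 ≤ c) (hp : p ≠ 0) (y : E) : ‖c ^ p⁻¹ • y‖ ^ p = c * ‖y‖ ^ p := by
  rw [norm_smul, Real.norm_of_nonneg (by positivity),
    Real.mul_rpow (by positivity) (norm_nonneg _), Real.rpow_inv_rpow hc hp]

theorem exists_le_mul_of_rpow_inv_le_mul_iSup {Ω : Type*} [TopologicalSpace Ω] [CompactSpace Ω]
    [Nonempty Ω] {h : Ω → ℝ} (hh : Continuous h) (h0 : ∀ x, 0 ≤ h x) {a K p : ℝ} (ha : 0 ≤ a)
    (hK : 0 ≤ K) (hp : 0 < p) (H : a ^ p⁻¹ ≤ K * ⨆ x, h x ^ p⁻¹) : ∃ x, a ≤ K ^ p * h x := by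
  obtain ⟨x₀, -, hx₀⟩ := isCompact_univ.exists_isMaxOn Set.univ_nonempty hh.continuousOn
  have hsup : ⨆ x, h x ^ p⁻¹ ≤ h x₀ ^ p⁻¹ := ciSup_le fun x =>
    Real.rpow_le_rpow (h0 x) (hx₀ (Set.mem_univ x)) (by positivity)
  refine ⟨x₀, ?_⟩
  have := (Real.le_mul_rpow_inv_iff (by positivity) hK (h0 x₀) hp).1
    (H.trans (mul_le_mul_of_nonneg_left hsup hK))
  rwa [Real.rpow_inv_rpow ha hp.ne'] at this

theorem ContinuousMap.isOpen_setOf_forall_pos {Ω : Type*} [TopologicalSpace Ω] [CompactSpace Ω] :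
    IsOpen {g : C(Ω, ℝ) | ∀ x, 0 < g x} := by
  simpa [Set.MapsTo] using ContinuousMap.isOpen_setOfPred_mapsTo isCompact_univ isOpen_Ioi

theorem ContinuousMap.convex_setOf_forall_pos {Ω : Type*} [TopologicalSpace Ω] :
    Convex ℝ {g : C(Ω, ℝ) | ∀ x, 0 < g x} :=
  convex_iff_forall_pos.2 fun _ hg _ hh _ _ ha hb _ x =>
    add_pos (mul_pos ha (hg x)) (mul_pos hb (hh x))

theorem PointedCone.exists_positive_functional_nonpos {Ω : Type*} [TopologicalSpace Ω]
    [CompactSpace Ω] (C : PointedCone ℝ C(Ω, ℝ)) (hC : ∀ h ∈ C, ∃ x, h x ≤ 0) :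
    ∃ Λ : C(Ω, ℝ) →L[ℝ] ℝ, (∀ g, 0 ≤ g → 0 ≤ Λ g) ∧ Λ 1 = 1 ∧ ∀ h ∈ C, Λ h ≤ 0 := by
  have hdisj : Disjoint {g : C(Ω, ℝ) | ∀ x, 0 < g x} C := by
    refine Set.disjoint_left.2 fun h hpos hC' => ?_
    obtain ⟨x, hx⟩ := hC h hC'
    exact (hpos x).not_ge hx
  obtain ⟨f, u, hfP, hfC⟩ := geometric_hahn_banach_open ContinuousMap.convex_setOf_forall_pos
    ContinuousMap.isOpen_setOf_forall_pos C.convex hdisj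
  have hu : u ≤ 0 := by simpa using hfC 0 C.zero_mem
  have hf1 : f 1 < 0 := (hfP 1 fun _ => one_pos).trans_le hu
  have hfC_nonneg (h) (hh : h ∈ C) : 0 ≤ f h := by
    by_contra! hneg
    -- `t = (u - 1) / f h` is positive and `f (t • h) = u - 1 < u`
    have := hfC _ (C.smul_mem (div_pos_of_neg_of_neg (by linarith : u - 1 < 0) hneg).le hh)
    rw [map_smul, smul_eq_mul, div_mul_cancel₀ _ hneg.ne] at this
    linarith
  have hf_nonpos (g : C(Ω, ℝ)) (hg : 0 ≤ g) : f g ≤ 0 := by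
    by_contra! hpos
    -- `g + c • 1` is strictly positive but `f` vanishes on it
    have := hfP (g + (f g / -f 1) • 1) fun x =>
      add_pos_of_nonneg_of_pos (hg x) (by simpa using div_pos hpos (neg_pos.2 hf1))
    rw [map_add, map_smul, smul_eq_mul, div_mul_eq_mul_div, mul_div_assoc,
      div_neg_self hf1.ne] at this
    linarith
  refine ⟨(f 1)⁻¹ • f, fun g hg => ?_, inv_mul_cancel₀ hf1.ne, fun h hh => ?_⟩
  · exact mul_nonneg_of_nonpos_of_nonpos (inv_nonpos.2 hf1.le) (hf_nonpos g hg)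
  · exact mul_nonpos_of_nonpos_of_nonneg (inv_nonpos.2 hf1.le) (hfC_nonneg h hh)

section

variable {Ω : Type*} [TopologicalSpace Ω] [CompactSpace Ω] [T2Space Ω] [MeasurableSpace Ω]
  [BorelSpace Ω]

theorem exists_isProbabilityMeasure_integral_eq (Λ : C(Ω, ℝ) →ₗ[ℝ] ℝ)
    (hΛ : ∀ g, 0 ≤ g → 0 ≤ Λ g) (hΛ1 : Λ 1 = 1) :
    ∃ μ : Measure Ω, IsProbabilityMeasure μ ∧ μ.Regular ∧ ∀ g : C(Ω, ℝ), ∫ x, g x ∂μ = Λ g := by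
  let e := CompactlySupportedContinuousMap.continuousMapEquiv (α := Ω) (β := ℝ)
  let Λc : C_c(Ω, ℝ) →ₚ[ℝ] ℝ := PositiveLinearMap.mk₀
    { toFun := fun g => Λ (e.symm g)
      map_add' := fun _ _ => Λ.map_add _ _
      map_smul' := fun _ _ => Λ.map_smul _ _ }
    fun _ hg => hΛ _ hg
  have hint (g : C(Ω, ℝ)) : ∫ x, g x ∂(RealRMK.rieszMeasure Λc) = Λ g :=
    RealRMK.integral_rieszMeasure Λc (e g)
  refine ⟨RealRMK.rieszMeasure Λc, ⟨?_⟩, inferInstance, hint⟩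
  have := hint 1
  simp only [ContinuousMap.one_apply, integral_const, smul_eq_mul, mul_one, hΛ1] at this
  rwa [measureReal_def, ENNReal.toReal_eq_one_iff] at this

theorem exists_isProbabilityMeasure_le_integral {ι : Type*} (F : ι → ℝ) (G : ι → C(Ω, ℝ))
    (hFG : ∀ (n : ℕ) (i : Fin n → ι) (c : Fin n → ℝ), (∀ k, 0 ≤ c k) →
      ∃ x, ∑ k, c k * F (i k) ≤ ∑ k, c k * G (i k) x) :
    ∃ μ : Measure Ω, IsProbabilityMeasure μ ∧ μ.Regular ∧ ∀ i, F i ≤ ∫ x, G i x ∂μ := by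
  set C := PointedCone.hull ℝ (Set.range fun i => F i • 1 - G i)
  have hC (h) (hh : h ∈ C) : ∃ x, h x ≤ 0 := by
    obtain ⟨n, c, g, rfl⟩ := Submodule.mem_span_set'.1 hh
    choose i hi using fun k => (g k).2
    obtain ⟨x, hx⟩ := hFG n i (fun k => c k) fun k => (c k).2
    refine ⟨x, ?_⟩
    rw [← sub_nonpos, ← Finset.sum_sub_distrib] at hx
    simp only [ContinuousMap.sum_apply, ← hi, ← Nonneg.coe_smul, ContinuousMap.smul_apply,
      ContinuousMap.sub_apply, ContinuousMap.one_apply, smul_eq_mul, mul_one, mul_sub]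
    exact hx
  obtain ⟨Λ, hΛ, hΛ1, hΛC⟩ := C.exists_positive_functional_nonpos hC
  obtain ⟨μ, hμ, hreg, hint⟩ := exists_isProbabilityMeasure_integral_eq Λ.toLinearMap hΛ hΛ1
  refine ⟨μ, hμ, hreg, fun i => ?_⟩
  have := hΛC _ (PointedCone.subset_hull ⟨i, rfl⟩)
  rw [map_sub, map_smul, hΛ1, smul_eq_mul, mul_one, ← ContinuousLinearMap.coe_coe, ← hint] at this
  linarith

end

instance (X : Type*) [NormedAddCommGroup X] [NormedSpace ℝ X] : CompactSpace (DualBall X) :=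
  (isCompact_iff_compactSpace (s := {φ : WeakDual ℝ X | ‖WeakDual.toStrongDual φ‖ ≤ 1})).mp <| by
    simpa [Metric.closedBall] using WeakDual.isCompact_closedBall (𝕜 := ℝ) (E := X) 0 1

instance (X : Type*) [NormedAddCommGroup X] [NormedSpace ℝ X] : Nonempty (DualBall X) :=
  ⟨⟨0, by simp⟩⟩

theorem exists_weighted_sum_rpow_le_of_summing {p K : ℝ} (hp : 0 < p) (hK : 0 ≤ K)
    {U : Submodule ℝ (StrongDual ℝ X →L[ℝ] Y)} (hUeps : ∀ T ∈ U, MemEps T) {S : U →L[ℝ] Z}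
    (hS : ∀ (n : ℕ) (T : Fin n → U), (∑ i, ‖S (T i)‖ ^ p) ^ p⁻¹ ≤
      K * ⨆ φ : DualBall X, (∑ i, ‖evalBall (T i : StrongDual ℝ X →L[ℝ] Y) φ‖ ^ p) ^ p⁻¹)
    (n : ℕ) (T : Fin n → U) (c : Fin n → ℝ) (hc : ∀ k, 0 ≤ c k) :
    ∃ φ, ∑ k, c k * ‖S (T k)‖ ^ p ≤
      ∑ k, c k * (K ^ p * ‖evalBall (T k : StrongDual ℝ X →L[ℝ] Y) φ‖ ^ p) := by
  set T' : Fin n → U := fun k => c k ^ p⁻¹ • T k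
  have hS' (k) : ‖S (T' k)‖ ^ p = c k * ‖S (T k)‖ ^ p := by
    rw [map_smul, norm_rpow_inv_smul_rpow (hc k) hp.ne']
  have hT' (k) (φ : DualBall X) : ‖evalBall (T' k : StrongDual ℝ X →L[ℝ] Y) φ‖ ^ p =
      c k * ‖evalBall (T k : StrongDual ℝ X →L[ℝ] Y) φ‖ ^ p :=
    norm_rpow_inv_smul_rpow (hc k) hp.ne' _
  obtain ⟨φ, hφ⟩ := exists_le_mul_of_rpow_inv_le_mul_iSup
    (continuous_finsetSum _ fun k _ => ((hUeps _ (T' k).2).norm.rpow_const fun _ => Or.inr hp.le))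
    (fun φ => Finset.sum_nonneg fun k _ => by positivity)
    (Finset.sum_nonneg fun k _ => by positivity) hK hp (hS n T')
  refine ⟨φ, ?_⟩
  simp only [hS', hT'] at hφ
  simpa only [Finset.mul_sum, mul_left_comm] using hφ

theorem pietsch_domination_of_lp_summing_general
    (p : ℝ) (hp : 1 ≤ p)
    (U : Submodule ℝ (StrongDual ℝ X →L[ℝ] Y))
    (hUeps : ∀ T ∈ U, MemEps T)
    (S : U →L[ℝ] Z) (hS : IsLpSumming p U S) :
    ∃ K : ℝ, 0 ≤ K ∧ ∃ μ : Measure (DualBall X), IsProbabilityMeasure μ ∧ μ.Regular ∧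
      ∀ T : U, ‖S T‖ ≤
        K * (∫ φ, ‖evalBall (T : StrongDual ℝ X →L[ℝ] Y) φ‖ ^ p ∂μ) ^ (1/p) := by
  obtain ⟨K, hK, hsum⟩ := hS
  simp only [one_div] at hsum ⊢
  have hp0 : 0 < p := zero_lt_one.trans_le hp
  have hcont (T : U) :
      Continuous fun φ => K ^ p * ‖evalBall (T : StrongDual ℝ X →L[ℝ] Y) φ‖ ^ p :=
    continuous_const.mul ((hUeps T T.2).norm.rpow_const fun _ => Or.inr hp0.le)
  obtain ⟨μ, hμ, hreg, hle⟩ := exists_isProbabilityMeasure_le_integral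
    (fun T : U => ‖S T‖ ^ p) (fun T => ⟨_, hcont T⟩)
    (exists_weighted_sum_rpow_le_of_summing hp0 hK hUeps hsum)
  refine ⟨K, hK, μ, hμ, hreg, fun T => ?_⟩
  rw [Real.le_mul_rpow_inv_iff (norm_nonneg _) hK (integral_nonneg fun _ => by positivity) hp0,
    ← integral_const_mul]
  exact hle T

/-- **Botelho–Santos Pietsch-type domination theorem.**  If `U` is a closed subspace of
the ε-product `X ε Y` and `S : U → Z` is `(ℓ^s_p, ℓ_p)`-summing, then there are `K ≥ 0`
and a regular Borel probability measure `μ` on the dual ball `(B_{X*}, w*)` such that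
`‖S T‖ ≤ K (∫ ‖T(x*)‖^p dμ)^{1/p}` for all `T ∈ U`. -/
theorem pietsch_domination_of_lp_summing
    [CompleteSpace X] [CompleteSpace Y] [CompleteSpace Z]
    (p : ℝ) (hp : 1 ≤ p)
    (U : Submodule ℝ (StrongDual ℝ X →L[ℝ] Y))
    (hUclosed : IsClosed (U : Set (StrongDual ℝ X →L[ℝ] Y)))
    (hUeps : ∀ T ∈ U, MemEps T)
    (S : U →L[ℝ] Z) (hS : IsLpSumming p U S) :
    ∃ K : ℝ, 0 ≤ K ∧ ∃ μ : Measure (DualBall X), IsProbabilityMeasure μ ∧ μ.Regular ∧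
      ∀ T : U, ‖S T‖ ≤
        K * (∫ φ, ‖evalBall (T : StrongDual ℝ X →L[ℝ] Y) φ‖ ^ p ∂μ) ^ (1/p) :=
  pietsch_domination_of_lp_summing_general p hp U hUeps S hS
end

section
/- Let X, Y, Z be Banach spaces, 1 ≤ p < ∞, let U be a closed subspace of UM(X*,Y), and let S : U → Z be an operator. Then S is (ℓ^s_p,ℓ_p)-controlled if and only if there exist μ ∈ P(B_{X*}), a closed subspace W of the Lebesgue–Bochner space L_p(μ,Y), and a bounded operator S̃ : W → Z such that i_μ(U) ⊆ W and S = S̃ ∘ (i_μ restricted to U). -/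
/-!
The bound `‖S T‖ ≤ K ‖i_μ T‖_p` defining control says precisely that `S` descends to a bounded
operator on `i_μ(U) ⊆ L_p(μ,Y)`; as `Z` is complete, it extends by continuity to the closure of
`i_μ(U)`. Conversely, a factorization `S = S̃ ∘ i_μ` gives the bound with `K = ‖S̃‖`.
-/

open MeasureTheory Filter Topology

variable {X Y Z : Type*} [NormedAddCommGroup X] [NormedSpace ℝ X]
  [NormedAddCommGroup Y] [NormedSpace ℝ Y] [NormedAddCommGroup Z] [NormedSpace ℝ Z]

theorem MeasureTheory.MemLp.norm_toLp_eq_integral_rpow {α E : Type*} [MeasurableSpace α]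
    {μ : Measure α} [NormedAddCommGroup E] {p : ℝ} (hp : 0 < p) {f : α → E}
    (hf : MemLp f (ENNReal.ofReal p) μ) :
    ‖hf.toLp f‖ = (∫ a, ‖f a‖ ^ p ∂μ) ^ (1 / p) := by
  rw [Lp.norm_toLp, hf.eLpNorm_eq_integral_rpow_norm (by simpa using hp) ENNReal.ofReal_ne_top,
    ENNReal.toReal_ofReal hp.le, ENNReal.toReal_ofReal (by positivity), one_div]

noncomputable def LinearMap.toLp {𝕜 M α E : Type*} [NormedRing 𝕜] [AddCommMonoid M] [Module 𝕜 M]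
    [MeasurableSpace α] [NormedAddCommGroup E] [Module 𝕜 E] [IsBoundedSMul 𝕜 E]
    {p : ENNReal} {μ : Measure α} (L : M →ₗ[𝕜] α → E) (hL : ∀ m, MemLp (L m) p μ) :
    M →ₗ[𝕜] Lp E p μ where
  toFun m := (hL m).toLp (L m)
  map_add' m m' := by simp only [map_add]; exact MemLp.toLp_add _ _
  map_smul' c m := by simp only [map_smul]; exact MemLp.toLp_const_smul _ _

theorem LinearMap.denseRange_codRestrict_topologicalClosure_range {𝕜 E F : Type*} [Ring 𝕜]
    [AddCommGroup E] [Module 𝕜 E] [AddCommGroup F] [Module 𝕜 F] [TopologicalSpace F]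
    [IsTopologicalAddGroup F] [ContinuousConstSMul 𝕜 F] (j : E →ₗ[𝕜] F) :
    DenseRange (j.codRestrict (range j).topologicalClosure
      fun x => (range j).le_topologicalClosure (mem_range_self j x)) := by
  have hdense := (denseRange_inclusion_iff (range j).le_topologicalClosure).2
    (Submodule.topologicalClosure_coe (range j)).subset
  exact hdense.comp j.surjective_rangeRestrict.denseRange (continuous_inclusion _)

theorem LinearMap.exists_extend_topologicalClosure_range {𝕜 E F Z : Type*}
    [NontriviallyNormedField 𝕜] [AddCommGroup E] [Module 𝕜 E] [NormedAddCommGroup F]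
    [NormedSpace 𝕜 F] [NormedAddCommGroup Z] [NormedSpace 𝕜 Z] [CompleteSpace Z]
    (j : E →ₗ[𝕜] F) (S : E →ₗ[𝕜] Z) {K : ℝ} (hS : ∀ x, ‖S x‖ ≤ K * ‖j x‖) :
    ∃ S' : (range j).topologicalClosure →L[𝕜] Z, ∀ x,
      S' ⟨j x, (range j).le_topologicalClosure (mem_range_self j x)⟩ = S x :=
  ⟨S.extendOfNorm _, extendOfNorm_eq j.denseRange_codRestrict_topologicalClosure_range ⟨K, hS⟩⟩

theorem norm_evalBall_le (T : StrongDual ℝ X →L[ℝ] Y) (φ : DualBall X) :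
    ‖evalBall T φ‖ ≤ ‖T‖ :=
  T.le_of_opNorm_le_of_le le_rfl φ.2 |>.trans_eq (mul_one _)

noncomputable def evalBallₗ : (StrongDual ℝ X →L[ℝ] Y) →ₗ[ℝ] DualBall X → Y where
  toFun := evalBall
  map_add' _ _ := rfl
  map_smul' _ _ := rfl

theorem memLp_evalBall {T : StrongDual ℝ X →L[ℝ] Y} {μ : Measure (DualBall X)} [IsFiniteMeasure μ]
    (hT : AEStronglyMeasurable (evalBall T) μ) (p : ENNReal) : MemLp (evalBall T) p μ :=
  .of_bound hT ‖T‖ (.of_forall (norm_evalBall_le T))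

theorem isLpControlled_iff_factors_general
    [CompleteSpace Z]
    (p : ℝ) [Fact (1 ≤ ENNReal.ofReal p)]
    (U : Submodule ℝ (StrongDual ℝ X →L[ℝ] Y))
    (hUM : ∀ T ∈ U, MemUM T)
    (S : U →L[ℝ] Z) :
    IsLpControlled p U S ↔
      ∃ μ : Measure (DualBall X), IsProbabilityMeasure μ ∧ μ.Regular ∧
        ∃ W : Submodule ℝ (Lp Y (ENNReal.ofReal p) μ),
          IsClosed (W : Set (Lp Y (ENNReal.ofReal p) μ)) ∧
          ∃ Stilde : W →L[ℝ] Z,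
            ∀ T : U,
              ∃ (h : MemLp (evalBall (T : StrongDual ℝ X →L[ℝ] Y))
                    (ENNReal.ofReal p) μ)
                (hW : MemLp.toLp _ h ∈ W),
                Stilde ⟨MemLp.toLp _ h, hW⟩ = S T := by
  have hp : 0 < p := zero_lt_one.trans_le (ENNReal.one_le_ofReal.mp Fact.out)
  constructor
  · rintro ⟨K, -, μ, hμ, hreg, hS⟩
    have hmem (T : U) : MemLp (evalBallₗ.domRestrict U T) (ENNReal.ofReal p) μ :=
      memLp_evalBall (hUM T T.2 μ hμ hreg) _
    let j : U →ₗ[ℝ] Lp Y (ENNReal.ofReal p) μ := LinearMap.toLp (evalBallₗ.domRestrict U) hmem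
    have hj (T : U) : ‖j T‖ = (∫ φ, ‖evalBall (T : StrongDual ℝ X →L[ℝ] Y) φ‖ ^ p ∂μ) ^ (1 / p) :=
      (hmem T).norm_toLp_eq_integral_rpow hp
    -- instance search does not find the additive group structure of `U`
    let _ : AddCommGroup U := @Submodule.addCommGroup ℝ (StrongDual ℝ X →L[ℝ] Y) _ _ _ U
    obtain ⟨S', hS'⟩ := j.exists_extend_topologicalClosure_range S.toLinearMap (K := K)
      fun T => (hj T).symm ▸ hS T
    exact ⟨μ, hμ, hreg, _, Submodule.isClosed_topologicalClosure _, S', fun T => ⟨hmem T, _, hS' T⟩⟩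
  · rintro ⟨μ, hμ, hreg, W, -, S', hS'⟩
    refine ⟨‖S'‖, norm_nonneg S', μ, hμ, hreg, fun T => ?_⟩
    obtain ⟨hT, hW, hST⟩ := hS' T
    calc ‖S T‖ = ‖S' ⟨hT.toLp _, hW⟩‖ := by rw [hST]
      _ ≤ ‖S'‖ * ‖hT.toLp _‖ := S'.le_opNorm _
      _ = _ := by rw [hT.norm_toLp_eq_integral_rpow hp]

/-- An operator `S` defined on a closed subspace `U` of `UM(X*,Y)` is
`(ℓ^s_p, ℓ_p)`-controlled iff it factors as `S = S̃ ∘ i_μ|_U` through a closed subspace `W`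
of the Lebesgue–Bochner space `L_p(μ,Y)`, where `i_μ` sends `T` to the class of
`T|_{B_{X*}}` in `L_p(μ,Y)`. -/
theorem isLpControlled_iff_factors
    [CompleteSpace X] [CompleteSpace Y] [CompleteSpace Z]
    (p : ℝ) (hp : 1 ≤ p) [Fact (1 ≤ ENNReal.ofReal p)]
    (U : Submodule ℝ (StrongDual ℝ X →L[ℝ] Y))
    (hUclosed : IsClosed (U : Set (StrongDual ℝ X →L[ℝ] Y)))
    (hUM : ∀ T ∈ U, MemUM T)
    (S : U →L[ℝ] Z) :
    IsLpControlled p U S ↔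
      ∃ μ : Measure (DualBall X), IsProbabilityMeasure μ ∧ μ.Regular ∧
        ∃ W : Submodule ℝ (Lp Y (ENNReal.ofReal p) μ),
          IsClosed (W : Set (Lp Y (ENNReal.ofReal p) μ)) ∧
          ∃ Stilde : W →L[ℝ] Z,
            ∀ T : U,
              ∃ (h : MemLp (evalBall (T : StrongDual ℝ X →L[ℝ] Y))
                    (ENNReal.ofReal p) μ)
                (hW : MemLp.toLp _ h ∈ W),
                Stilde ⟨MemLp.toLp _ h, hW⟩ = S T :=
  isLpControlled_iff_factors_general p U hUM S
end

section
/- Let X be a Banach space and 1 ≤ p < ∞. Every S ∈ X*** satisfies, for all n ∈ ℕ and all x**_1,…,x**_n ∈ X**, the inequality (Σ_{i=1}^n |⟨S, x**_i⟩|^p)^{1/p} ≤ ‖S‖ · sup_{x* ∈ B_{X*}} (Σ_{i=1}^n |⟨x**_i, x*⟩|^p)^{1/p}; that is, S is (ℓ^s_p,ℓ_p)-summing as an operator from X** (viewed as a subspace of L(X*,ℝ)) to ℝ, with constant K = ‖S‖. -/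
open Filter Topology

/-- The old Mathlib `NormedSpace.Dual` (removed since): the continuous dual `E →L[𝕜] 𝕜`. -/
abbrev NormedSpace.Dual (𝕜 : Type*) [NontriviallyNormedField 𝕜] (E : Type*)
    [SeminormedAddCommGroup E] [NormedSpace 𝕜 E] : Type _ :=
  E →L[𝕜] 𝕜

/-!
Goldstine's theorem is not needed: this holds for every functional `S` on any space of functionals
`V →L[ℝ] ℝ`. Pick `b` in the unit ball of `ℓ_q` norming `(S Tᵢ)ᵢ` in `ℓ_p`. Then
`‖(S Tᵢ)‖_p = S (∑ bᵢ Tᵢ) ≤ ‖S‖ ‖∑ bᵢ Tᵢ‖`, and by Hölder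
`|∑ bᵢ Tᵢ v| ≤ (∑ |Tᵢ v|^p)^{1/p}` for every `v` in the unit ball of `V`.
-/

open Finset

theorem SignType.abs_coe_le_one {α : Type*} [Ring α] [LinearOrder α] [IsOrderedRing α]
    (s : SignType) : |(s : α)| ≤ 1 := by
  cases s <;> simp

namespace Real

variable {ι : Type*} {p : ℝ}

theorem sum_rpow_sub_one_mul_le (hp : 1 ≤ p) (s : Finset ι) {a c : ι → ℝ}
    (ha : ∀ i ∈ s, 0 ≤ a i) (hc : ∀ i ∈ s, 0 ≤ c i) :
    ∑ i ∈ s, a i ^ (p - 1) * c i ≤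
      (∑ i ∈ s, a i ^ p) ^ (1 - 1 / p) * (∑ i ∈ s, c i ^ p) ^ (1 / p) := by
  rcases hp.eq_or_lt with rfl | hp
  · simp
  have hpq : p.conjExponent.HolderConjugate p := (HolderConjugate.conjExponent hp).symm
  have hp1 : p - 1 ≠ 0 := sub_ne_zero.2 hp.ne'
  have hpow : ∀ i ∈ s, (a i ^ (p - 1)) ^ p.conjExponent = a i ^ p := fun i hi => by
    rw [← rpow_mul (ha i hi), conjExponent, mul_div_cancel₀ _ hp1]
  have hexp : 1 / p.conjExponent = 1 - 1 / p := by
    rw [conjExponent]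
    field_simp
  calc ∑ i ∈ s, a i ^ (p - 1) * c i
      ≤ (∑ i ∈ s, (a i ^ (p - 1)) ^ p.conjExponent) ^ (1 / p.conjExponent) *
          (∑ i ∈ s, c i ^ p) ^ (1 / p) :=
        inner_le_Lp_mul_Lq_of_nonneg s hpq (fun i hi => rpow_nonneg (ha i hi) _) hc
    _ = _ := by rw [sum_congr rfl hpow, hexp]

variable [Fintype ι]

/-- The second condition says that `b` lies in the unit ball of `ℓ_q`, `1/p + 1/q = 1`. -/
theorem exists_dual_vector_lp (hp : 1 ≤ p) (a : ι → ℝ) :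
    ∃ b : ι → ℝ, ∑ i, b i * a i = (∑ i, |a i| ^ p) ^ (1 / p) ∧
      ∀ c : ι → ℝ, |∑ i, b i * c i| ≤ (∑ i, |c i| ^ p) ^ (1 / p) := by
  have hp0 : 0 < p := zero_lt_one.trans_le hp
  set t := ∑ i, |a i| ^ p
  rcases (sum_nonneg fun i _ => rpow_nonneg (abs_nonneg (a i)) p : 0 ≤ t).eq_or_lt
    with ht | ht
  · refine ⟨0, ?_, fun c => ?_⟩
    · simp only [Pi.zero_apply, zero_mul, sum_const_zero]
      rw [show t = 0 from ht.symm, zero_rpow (one_div_pos.2 hp0).ne']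
    · simpa using rpow_nonneg (sum_nonneg fun i _ => rpow_nonneg (abs_nonneg (c i)) p) _
  set K := t ^ (1 - 1 / p)
  have hK : 0 < K := rpow_pos_of_pos ht _
  refine ⟨fun i => SignType.sign (a i) * |a i| ^ (p - 1) / K, ?_, fun c => ?_⟩
  · have hterm : ∀ i, SignType.sign (a i) * |a i| ^ (p - 1) / K * a i = |a i| ^ p / K :=
      fun i => by
        rw [div_mul_eq_mul_div, mul_right_comm, sign_mul_self, mul_comm,
          ← rpow_add_one' (abs_nonneg _) (by linarith), sub_add_cancel]
    rw [sum_congr rfl fun i _ => hterm i, ← sum_div, div_eq_iff hK.ne', ← rpow_add ht]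
    rw [add_sub_cancel, rpow_one]
  · have hb : ∀ i, |SignType.sign (a i) * |a i| ^ (p - 1) / K| ≤ |a i| ^ (p - 1) / K :=
      fun i => by
        rw [abs_div, abs_of_pos hK, abs_mul, abs_of_nonneg (rpow_nonneg (abs_nonneg _) _)]
        gcongr
        exact mul_le_of_le_one_left (rpow_nonneg (abs_nonneg _) _)
          (SignType.abs_coe_le_one _)
    calc |∑ i, SignType.sign (a i) * |a i| ^ (p - 1) / K * c i|
        ≤ ∑ i, |a i| ^ (p - 1) * |c i| / K := by
          refine (abs_sum_le_sum_abs _ _).trans (sum_le_sum fun i _ => ?_)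
          rw [abs_mul, ← div_mul_eq_mul_div (|a i| ^ (p - 1)) K]
          exact mul_le_mul_of_nonneg_right (hb i) (abs_nonneg _)
      _ ≤ K * (∑ i, |c i| ^ p) ^ (1 / p) / K := by
          rw [← sum_div]
          gcongr
          exact sum_rpow_sub_one_mul_le hp _ (fun i _ => abs_nonneg _) fun i _ => abs_nonneg _
      _ = (∑ i, |c i| ^ p) ^ (1 / p) := mul_div_cancel_left₀ _ hK.ne'

end Real

namespace ContinuousLinearMap

variable {V ι : Type*} [SeminormedAddCommGroup V] [NormedSpace ℝ V] [Fintype ι] {p : ℝ}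

theorem bddAbove_range_rpow_sum_abs_apply (hp : 0 ≤ p) (T : ι → V →L[ℝ] ℝ) :
    BddAbove (Set.range fun v : {v : V // ‖v‖ ≤ 1} => (∑ i, |T i v| ^ p) ^ (1 / p)) := by
  refine ⟨(∑ i, ‖T i‖ ^ p) ^ (1 / p), ?_⟩
  rintro _ ⟨v, rfl⟩
  dsimp only
  gcongr with i
  simpa using (T i).unit_le_opNorm v v.2

theorem norm_sum_smul_le_iSup (hp : 0 ≤ p) {b : ι → ℝ}
    (hb : ∀ c : ι → ℝ, |∑ i, b i * c i| ≤ (∑ i, |c i| ^ p) ^ (1 / p)) (T : ι → V →L[ℝ] ℝ) :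
    ‖∑ i, b i • T i‖ ≤ ⨆ v : {v : V // ‖v‖ ≤ 1}, (∑ i, |T i v| ^ p) ^ (1 / p) := by
  refine opNorm_le_of_unit_norm (Real.iSup_nonneg fun v => by positivity) fun v hv => ?_
  calc ‖(∑ i, b i • T i) v‖ = |∑ i, b i * T i v| := by simp [Real.norm_eq_abs]
    _ ≤ (∑ i, |T i v| ^ p) ^ (1 / p) := hb _
    _ ≤ _ := le_ciSup (bddAbove_range_rpow_sum_abs_apply hp T) ⟨v, hv.le⟩

theorem rpow_sum_abs_apply_le_opNorm_mul_iSup (hp : 1 ≤ p) (S : (V →L[ℝ] ℝ) →L[ℝ] ℝ)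
    (T : ι → V →L[ℝ] ℝ) :
    (∑ i, |S (T i)| ^ p) ^ (1 / p) ≤
      ‖S‖ * ⨆ v : {v : V // ‖v‖ ≤ 1}, (∑ i, |T i v| ^ p) ^ (1 / p) := by
  obtain ⟨b, hba, hb⟩ := Real.exists_dual_vector_lp hp (fun i => S (T i))
  calc (∑ i, |S (T i)| ^ p) ^ (1 / p)
    _ = S (∑ i, b i • T i) := by
      rw [← hba, map_sum]
      simp only [map_smul, smul_eq_mul]
    _ ≤ ‖S (∑ i, b i • T i)‖ := Real.le_norm_self _
    _ ≤ ‖S‖ * ‖∑ i, b i • T i‖ := S.le_opNorm _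
    _ ≤ _ := by gcongr; exact norm_sum_smul_le_iSup (by linarith) hb T

end ContinuousLinearMap

theorem third_dual_lp_summing_general
    {X : Type*} [NormedAddCommGroup X] [NormedSpace ℝ X]
    (p : ℝ) (hp : 1 ≤ p)
    (S : NormedSpace.Dual ℝ (NormedSpace.Dual ℝ (NormedSpace.Dual ℝ X)))
    (n : ℕ) (x'' : Fin n → NormedSpace.Dual ℝ (NormedSpace.Dual ℝ X)) :
    (∑ i, |S (x'' i)| ^ p) ^ (1/p) ≤
      ‖S‖ * ⨆ x' : {x' : NormedSpace.Dual ℝ X // ‖x'‖ ≤ 1},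
        (∑ i, |x'' i x'.1| ^ p) ^ (1/p) :=
  S.rpow_sum_abs_apply_le_opNorm_mul_iSup hp x''

/-- Every element `S` of the third dual `X***` is `(ℓ^s_p, ℓ_p)`-summing as an operator
from `X**` (viewed inside `L(X*,ℝ)`) to `ℝ`, with constant `K = ‖S‖`:
`(Σ |⟨S, x**_i⟩|^p)^{1/p} ≤ ‖S‖ · sup_{x* ∈ B_{X*}} (Σ |⟨x**_i, x*⟩|^p)^{1/p}`. -/
theorem third_dual_lp_summing
    {X : Type*} [NormedAddCommGroup X] [NormedSpace ℝ X] [CompleteSpace X]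
    (p : ℝ) (hp : 1 ≤ p)
    (S : NormedSpace.Dual ℝ (NormedSpace.Dual ℝ (NormedSpace.Dual ℝ X)))
    (n : ℕ) (x'' : Fin n → NormedSpace.Dual ℝ (NormedSpace.Dual ℝ X)) :
    (∑ i, |S (x'' i)| ^ p) ^ (1/p) ≤
      ‖S‖ * ⨆ x' : {x' : NormedSpace.Dual ℝ X // ‖x'‖ ≤ 1},
        (∑ i, |x'' i x'.1| ^ p) ^ (1/p) :=
  third_dual_lp_summing_general p hp S n x''
end

section
/- Let X and Y be Banach spaces. If X contains no subspace isomorphic to ℓ_1, then every T ∈ L(X*,Y) with separable range belongs to UM(X*,Y), i.e., the restriction of T to B_{X*} is strongly μ-measurable for every regular Borel probability measure μ on (B_{X*}, w*). -/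
open MeasureTheory Filter Topology

variable {X Y Z : Type*} [NormedAddCommGroup X] [NormedSpace ℝ X]
  [NormedAddCommGroup Y] [NormedSpace ℝ Y] [NormedAddCommGroup Z] [NormedSpace ℝ Z]

/-- `X` contains no subspace isomorphic to `ℓ_1`: there is no bounded-below operator
(i.e. isomorphic embedding) from `ℓ_1` into `X`. -/
def ContainsNoL1 (X : Type*) [NormedAddCommGroup X] [NormedSpace ℝ X] : Prop :=
  ¬ ∃ (J : lp (fun _ : ℕ => ℝ) 1 →L[ℝ] X) (c : ℝ), 0 < c ∧ ∀ v, c * ‖v‖ ≤ ‖J v‖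

/-!
By Pettis' measurability theorem, a map with separable range is strongly measurable as soon as
its compositions with all functionals are measurable. For `y* ∈ Y*` the composition of `y*` with
`T` restricted to the dual ball is the element `y* ∘ T` of `X**` restricted to the dual ball, so
the theorem reduces to the half of Haydon's theorem saying that, when `ℓ_1` does not embed in `X`,
every `F ∈ X**` is universally measurable on `B_{X*}`.

For that half: if `F` is not `μ`-measurable, there are `α < β` and a non-null set `E` each of
whose non-null measurable parts contains points where `F < α` and points where `F > β`. Picking
such points in the support of finitely many non-null cells and approximating `F` at them by an
element of `X` of norm at most `‖F‖` (Goldstine), one builds inductively a bounded sequence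
`(x_n)` in `X` for which the pairs `{φ(x_n) < α}`, `{φ(x_n) > β}` are Boolean independent on
the dual ball. Testing `∑ v_n x_n` against points of cells chosen according to the signs of `v`
shows that `v ↦ ∑ v_n x_n` embeds `ℓ_1` into `X` (Rosenthal).
-/

open Metric

theorem exists_seq_forall_fin_of_snoc {α : Type*} (P : ∀ n, (Fin n → α) → Prop)
    (h0 : P 0 Fin.elim0) (hstep : ∀ n v, P n v → ∃ a, P (n + 1) (Fin.snoc v a)) :
    ∃ x : ℕ → α, ∀ n, P n fun i => x i := by
  classical
  obtain ⟨a₀, -⟩ := hstep 0 _ h0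
  let next : ∀ n, (Fin n → α) → α := fun n v =>
    if h : P n v then (hstep n v h).choose else a₀
  let x : ℕ → α := fun n => Nat.strongRec (fun n ih => next n fun i => ih i i.2) n
  have hx : ∀ n, x n = next n fun i => x i := fun n => Nat.strongRec_eq _ n
  refine ⟨x, fun n => ?_⟩
  induction n with
  | zero => convert h0 using 1
  | succ n ih =>
    have hsnoc : (fun i : Fin (n + 1) => x i) = Fin.snoc (fun i : Fin n => x i) (x n) := by
      funext i
      refine Fin.lastCases ?_ (fun j => ?_) i <;> simp
    rw [hsnoc, hx n]
    simpa only [next, dif_pos ih] using (hstep n _ ih).choose_spec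

section Separation

variable {Ω : Type*} [MeasurableSpace Ω] {μ : Measure Ω} {g : Ω → ℝ}

theorem aemeasurable_of_forall_rat_lt_exists_separating
    (h : ∀ a b : ℚ, a < b → ∃ S, MeasurableSet S ∧
      μ ({x | g x < a} \ S) = 0 ∧ μ (S ∩ {x | b < g x}) = 0) :
    AEMeasurable g μ := by
  choose S hSm hlt hgt using h
  refine NullMeasurable.aemeasurable
    (measurable_of_Iio (δ := NullMeasurableSpace Ω μ) fun t => ?_)
  let U : Set Ω := ⋃ (a : ℚ) (b : ℚ) (hab : a < b) (_ : (b : ℝ) < t), S a b hab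
  have hU : MeasurableSet U := by measurability
  refine hU.nullMeasurableSet.congr (ae_eq_set.2 ⟨?_, ?_⟩)
  · refine measure_mono_null (t := ⋃ (a : ℚ) (b : ℚ) (hab : a < b) (_ : (b : ℝ) < t),
      S a b hab ∩ {x | b < g x}) ?_ (by simp [measure_iUnion_null_iff, hgt])
    intro x ⟨hxU, hxt⟩
    simp only [U, Set.mem_iUnion] at hxU
    obtain ⟨a, b, hab, hbt, hx⟩ := hxU
    simp only [Set.mem_iUnion]
    exact ⟨a, b, hab, hbt, hx, hbt.trans_le (not_lt.1 hxt)⟩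
  · refine measure_mono_null (t := ⋃ (a : ℚ) (b : ℚ) (hab : a < b) (_ : (b : ℝ) < t),
      {x | g x < a} \ S a b hab) ?_ (by simp [measure_iUnion_null_iff, hlt])
    intro x ⟨hxt, hxU⟩
    obtain ⟨a, hga, hat⟩ := exists_rat_btwn (show g x < t from hxt)
    obtain ⟨b, hab, hbt⟩ := exists_rat_btwn hat
    have hab' : a < b := by exact_mod_cast hab
    simp only [Set.mem_iUnion]
    refine ⟨a, b, hab', hbt, hga, fun hxS => hxU ?_⟩
    simp only [U, Set.mem_iUnion]
    exact ⟨a, b, hab', hbt, hxS⟩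

theorem exists_oscillation_set_of_not_aemeasurable [SFinite μ] (hg : ¬AEMeasurable g μ) :
    ∃ a b : ℝ, a < b ∧ ∃ E, MeasurableSet E ∧ μ E ≠ 0 ∧ ∀ C, MeasurableSet C → C ⊆ E →
      μ C ≠ 0 → (∃ x ∈ C, g x < a) ∧ ∃ x ∈ C, b < g x := by
  obtain ⟨a, b, hab, hsep⟩ : ∃ a b : ℚ, a < b ∧ ∀ S, MeasurableSet S →
      μ ({x | g x < a} \ S) ≠ 0 ∨ μ (S ∩ {x | b < g x}) ≠ 0 := by
    contrapose! hg
    exact aemeasurable_of_forall_rat_lt_exists_separating hg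
  set A := {x | g x < a}
  set B := {x | b < g x}
  have hA := measurableSet_toMeasurable μ A
  have hB := measurableSet_toMeasurable μ B
  refine ⟨a, b, by exact_mod_cast hab, toMeasurable μ A ∩ toMeasurable μ B, hA.inter hB, ?_, ?_⟩
  · have hAB : μ (toMeasurable μ A ∩ B) ≠ 0 := by
      simpa [Set.sdiff_eq_empty.2 (subset_toMeasurable μ A)] using hsep _ hA
    exact fun h0 => hAB (measure_mono_null
      (Set.inter_subset_inter_right _ (subset_toMeasurable μ B)) h0)
  · intro C hC hCE hC0
    have key : ∀ D, C ⊆ toMeasurable μ D → (D ∩ C).Nonempty := fun D hCD =>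
      nonempty_of_measure_ne_zero <| by
        rwa [← Measure.measure_toMeasurable_inter_of_sFinite (μ := μ) hC,
          Set.inter_eq_right.2 hCD]
    obtain ⟨x, hxA, hxC⟩ := key A (hCE.trans Set.inter_subset_left)
    obtain ⟨y, hyB, hyC⟩ := key B (hCE.trans Set.inter_subset_right)
    exact ⟨⟨x, hxC, hxA⟩, y, hyC, hyB⟩

end Separation

theorem measure_inter_support_restrict {Ω : Type*} [TopologicalSpace Ω] [R1Space Ω]
    [MeasurableSpace Ω] [BorelSpace Ω] {μ : Measure Ω} [μ.Regular] {C : Set Ω} (hC : μ C ≠ ⊤) :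
    μ (C ∩ (μ.restrict C).support) = μ C := by
  have := Measure.Regular.restrict_of_measure_ne_top hC
  rw [Set.inter_comm, ← Measure.restrict_apply Measure.isClosed_support.measurableSet,
    measure_congr (ae_eq_univ.2 Measure.measure_compl_support_of_regular),
    Measure.restrict_apply_univ]

section Pettis

variable {α E : Type*} [MeasurableSpace α]

theorem measurable_of_forall_measurable_dist [PseudoMetricSpace E] [MeasurableSpace E]
    [BorelSpace E] {f : α → E} {c : Set E} (hc : c.Countable) (hfc : Set.range f ⊆ closure c)
    (hf : ∀ y ∈ c, Measurable fun x => dist (f x) y) : Measurable f := by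
  refine measurable_of_isOpen fun U hU => ?_
  have hpre : f ⁻¹' U = ⋃ y ∈ c, ⋃ (r : ℚ) (_ : ball y r ⊆ U), {x | dist (f x) y < r} := by
    ext x
    simp only [Set.mem_preimage, Set.mem_iUnion, Set.mem_ofPred_eq, exists_prop]
    constructor
    · intro hx
      obtain ⟨ε, hε, hεU⟩ := Metric.isOpen_iff.1 hU _ hx
      obtain ⟨y, hy, hxy⟩ := Metric.mem_closure_iff.1 (hfc ⟨x, rfl⟩) (ε / 3) (by linarith)
      obtain ⟨r, hr1, hr2⟩ := exists_rat_btwn (show ε / 3 < 2 * ε / 3 by linarith)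
      refine ⟨y, hy, r, fun z hz => hεU ?_, by linarith⟩
      rw [mem_ball] at hz ⊢
      linarith [dist_triangle z y (f x), dist_comm (f x) y]
    · rintro ⟨y, -, r, hrU, hxy⟩
      exact hrU hxy
  rw [hpre]
  exact .biUnion hc fun y hy => .iUnion fun r => .iUnion fun _ =>
    measurableSet_lt (hf y hy) measurable_const

theorem exists_seq_strongDual_norm_eq_iSup [NormedAddCommGroup E] [NormedSpace ℝ E] {s : Set E}
    (hs : TopologicalSpace.IsSeparable s) :
    ∃ L : ℕ → StrongDual ℝ E, ∀ z ∈ s, ‖z‖ = ⨆ k, L k z := by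
  obtain ⟨c, hc, hsc⟩ := hs
  rcases c.eq_empty_or_nonempty with rfl | hne
  · simp only [closure_empty, Set.subset_empty_iff] at hsc
    exact ⟨0, by simp [hsc]⟩
  obtain ⟨d, rfl⟩ := hc.exists_eq_range hne
  choose L hL1 hLd using fun k => exists_dual_vector'' ℝ (d k)
  have hLz : ∀ k z, L k z ≤ ‖z‖ := fun k z =>
    (le_abs_self _).trans ((L k).le_of_opNorm_le (hL1 k) z |>.trans_eq (one_mul _))
  refine ⟨L, fun z hz => le_antisymm (le_of_forall_pos_lt_add fun ε hε => ?_)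
    (ciSup_le fun k => hLz k z)⟩
  obtain ⟨k, hk⟩ := Metric.mem_closure_range_iff.1 (hsc hz) (ε / 2) (by linarith)
  rw [dist_eq_norm] at hk
  have hbdd : BddAbove (Set.range fun k => L k z) :=
    ⟨‖z‖, Set.forall_mem_range.2 fun k => hLz k z⟩
  calc ‖z‖ ≤ ‖d k‖ + ‖z - d k‖ := norm_le_norm_add_norm_sub' z (d k)
    _ = L k z + L k (d k - z) + ‖z - d k‖ := by
      rw [map_sub, hLd, RCLike.ofReal_real_eq_id, id]; ring
    _ ≤ L k z + 2 * ‖z - d k‖ := by linarith [hLz k (d k - z), norm_sub_rev (d k) z]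
    _ < (⨆ k, L k z) + ε := by linarith [le_ciSup hbdd k]

theorem measurable_of_forall_strongDual_measurable [NormedAddCommGroup E] [NormedSpace ℝ E]
    [MeasurableSpace E] [BorelSpace E] {f : α → E}
    (hsep : TopologicalSpace.IsSeparable (Set.range f))
    (hf : ∀ L : StrongDual ℝ E, Measurable fun x => L (f x)) : Measurable f := by
  obtain ⟨c, hc, hfc⟩ := id hsep
  obtain ⟨L, hL⟩ := exists_seq_strongDual_norm_eq_iSup
    ((hsep.prod hc.isSeparable).image continuous_sub)
  refine measurable_of_forall_measurable_dist hc hfc fun y hy => ?_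
  have : (fun x => dist (f x) y) = fun x => ⨆ k, (L k (f x) - L k y) := by
    ext x
    rw [dist_eq_norm, hL _ ⟨(f x, y), ⟨⟨x, rfl⟩, hy⟩, rfl⟩]
    simp_rw [map_sub]
  rw [this]
  exact .iSup fun k => (hf (L k)).sub_const _

end Pettis

theorem mem_closure_image_closedBall_norm {ι : Type*} [Fintype ι]
    (F : StrongDual ℝ (StrongDual ℝ X)) (φ : ι → StrongDual ℝ X) :
    (fun i => F (φ i)) ∈ closure ((fun x i => φ i x) '' closedBall (0 : X) ‖F‖) := by
  classical
  by_contra hF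
  -- A functional separating `F ∘ φ` from the image pulls back to `ψ ∈ X*` with
  -- `‖F‖ * ‖ψ‖ ≤ u < F ψ`.
  have hconv : Convex ℝ (closure ((fun x i => φ i x) '' closedBall (0 : X) ‖F‖)) :=
    ((convex_closedBall 0 ‖F‖).linear_image (ContinuousLinearMap.pi φ).toLinearMap).closure
  obtain ⟨f, u, hfu, huF⟩ := geometric_hahn_banach_closed_point hconv isClosed_closure hF
  set ψ : StrongDual ℝ X := f.comp (ContinuousLinearMap.pi φ)
  have hψ : ∀ x ∈ closedBall (0 : X) ‖F‖, ψ x < u := fun x hx =>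
    hfu _ (subset_closure ⟨x, hx, rfl⟩)
  have hf : ∀ c : ι → ℝ, f c = ∑ i, c i * f (Pi.single i 1) := fun c => by
    conv_lhs => rw [← Finset.univ_sum_single c]
    rw [map_sum]
    refine Finset.sum_congr rfl fun i _ => ?_
    rw [← smul_eq_mul, ← map_smul, ← Pi.single_smul, smul_eq_mul, mul_one]
  have hψ_eq : ψ = ∑ i, f (Pi.single i 1) • φ i := by
    ext x
    rw [ContinuousLinearMap.comp_apply, hf]
    simp [mul_comm]
  have hu : 0 ≤ u := by simpa using (hψ 0 (mem_closedBall_self (norm_nonneg F))).le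
  have hnorm : ‖F‖ * ‖ψ‖ ≤ u := by
    rw [← abs_of_nonneg (norm_nonneg F), ← Real.norm_eq_abs, ← norm_smul]
    refine ContinuousLinearMap.opNorm_le_of_unit_norm hu fun x hx => ?_
    have hmem : ∀ y : X, ‖y‖ = 1 → ‖F‖ • y ∈ closedBall (0 : X) ‖F‖ := fun y hy => by
      simp [norm_smul, hy, abs_of_nonneg (norm_nonneg F)]
    have h1 := hψ _ (hmem x hx)
    have h2 := hψ _ (hmem (-x) (by rwa [norm_neg]))
    simp only [map_smul, map_neg, smul_neg, smul_apply] at h1 h2 ⊢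
    exact (abs_lt.2 ⟨by linarith, h1⟩).le
  have : f (fun i => F (φ i)) = F ψ := by rw [hf, hψ_eq]; simp [mul_comm]
  linarith [le_abs_self (F ψ), F.le_opNorm ψ, Real.norm_eq_abs (F ψ)]

def sideRay (α β : ℝ) : Bool → Set ℝ
  | false => Set.Iio α
  | true => Set.Ioi β

theorem isOpen_sideRay (α β : ℝ) (b : Bool) : IsOpen (sideRay α β b) := by
  cases b
  exacts [isOpen_Iio, isOpen_Ioi]


theorem exists_l1_hasSum_smul [CompleteSpace X] {x : ℕ → X} {M : ℝ} (hx : ∀ n, ‖x n‖ ≤ M) :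
    ∃ J : lp (fun _ : ℕ => ℝ) 1 →L[ℝ] X, ∀ v, HasSum (fun n => v n • x n) (J v) := by
  have hnorm : ∀ v : lp (fun _ : ℕ => ℝ) 1, HasSum (fun n => ‖v n‖ * M) (‖v‖ * M) := fun v =>
    (by simpa using lp.hasSum_norm (p := 1) one_pos v : HasSum (fun n => ‖v n‖) ‖v‖).mul_right M
  have hbound : ∀ (v : lp (fun _ : ℕ => ℝ) 1) n, ‖v n • x n‖ ≤ ‖v n‖ * M := fun v n => by
    rw [norm_smul]
    exact mul_le_mul_of_nonneg_left (hx n) (norm_nonneg _)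
  have hsum : ∀ v : lp (fun _ : ℕ => ℝ) 1, Summable fun n => v n • x n := fun v =>
    .of_norm_bounded (hnorm v).summable (hbound v)
  let J₀ : lp (fun _ : ℕ => ℝ) 1 →ₗ[ℝ] X :=
    { toFun := fun v => ∑' n, v n • x n
      map_add' := fun v w => by
        simp only [lp.coeFn_add, Pi.add_apply, add_smul]
        exact (hsum v).tsum_add (hsum w)
      map_smul' := fun c v => by
        simp only [lp.coeFn_smul, Pi.smul_apply, smul_eq_mul, mul_smul]
        exact (hsum v).tsum_const_smul c }
  refine ⟨J₀.mkContinuous M fun v => ?_, fun v => (hsum v).hasSum⟩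
  rw [mul_comm]
  exact tsum_of_norm_bounded (hnorm v) (hbound v)

theorem mul_norm_le_of_forall_nonempty_inter_sideRay {x : ℕ → X} {M α β : ℝ}
    (hx : ∀ n, ‖x n‖ ≤ M)
    (hind : ∀ n (s : Fin n → Bool),
      (⋂ i : Fin n, (fun φ : DualBall X => φ.1 (x i)) ⁻¹' sideRay α β (s i)).Nonempty)
    {J : lp (fun _ : ℕ => ℝ) 1 →L[ℝ] X} (hJ : ∀ v, HasSum (fun n => v n • x n) (J v))
    (v : lp (fun _ : ℕ => ℝ) 1) :
    (β - α) * ‖v‖ ≤ 2 * ‖J v‖ := by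
  have hnorm : HasSum (fun n => |v n|) ‖v‖ := by simpa using lp.hasSum_norm (p := 1) one_pos v
  have key : ∀ n, (β - α + 2 * M) * ∑ k ∈ Finset.range n, |v k| ≤
      2 * ‖J v‖ + 2 * M * ‖v‖ := by
    intro n
    -- `φ` and `ψ` lie in the cells given by the signs of `v` and by the opposite signs, so
    -- `θ = φ - ψ` gains `(β - α) * |v k|` on each of the first `n` terms of `θ (J v)`.
    obtain ⟨φ, hφ⟩ := hind n fun i => decide (0 ≤ v i)
    obtain ⟨ψ, hψ⟩ := hind n fun i => !decide (0 ≤ v i)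
    set θ : StrongDual ℝ X := WeakDual.toStrongDual φ.1 - WeakDual.toStrongDual ψ.1
    have hθ : ‖θ‖ ≤ 2 := (norm_sub_le _ _).trans (by linarith [φ.2, ψ.2])
    have hθx : ∀ k, |θ (x k)| ≤ 2 * M := fun k =>
      (θ.le_opNorm _).trans (mul_le_mul hθ (hx k) (norm_nonneg _) zero_le_two)
    have hnonneg : ∀ k, 0 ≤ v k * θ (x k) + 2 * M * |v k| := fun k => by
      have := mul_le_mul_of_nonneg_left (hθx k) (abs_nonneg (v k))
      linarith [neg_abs_le (v k * θ (x k)), abs_mul (v k) (θ (x k))]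
    have hsum :
        HasSum (fun k => v k * θ (x k) + 2 * M * |v k|) (θ (J v) + 2 * M * ‖v‖) := by
      simpa only [map_smul, smul_eq_mul] using ((hJ v).mapL θ).add (hnorm.mul_left (2 * M))
    have hθJ : θ (J v) ≤ 2 * ‖J v‖ :=
      (le_abs_self _).trans
        ((θ.le_opNorm _).trans (mul_le_mul_of_nonneg_right hθ (norm_nonneg _)))
    have hlow : ∀ k < n, (β - α + 2 * M) * |v k| ≤ v k * θ (x k) + 2 * M * |v k| := by
      intro k hk
      have hφk := Set.mem_iInter.1 hφ ⟨k, hk⟩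
      have hψk := Set.mem_iInter.1 hψ ⟨k, hk⟩
      have hθk : θ (x k) = φ.1 (x k) - ψ.1 (x k) := rfl
      by_cases hv : 0 ≤ v k
      · simp only [hv, decide_true, Bool.not_true, Set.mem_preimage, sideRay, Set.mem_Ioi,
          Set.mem_Iio] at hφk hψk
        rw [abs_of_nonneg hv]
        have : β - α ≤ θ (x k) := by linarith
        nlinarith
      · simp only [hv, decide_false, Bool.not_false, Set.mem_preimage, sideRay, Set.mem_Ioi,
          Set.mem_Iio] at hφk hψk
        rw [abs_of_neg (not_le.1 hv)]
        have : θ (x k) ≤ α - β := by linarith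
        nlinarith
    calc (β - α + 2 * M) * ∑ k ∈ Finset.range n, |v k|
        ≤ ∑ k ∈ Finset.range n, (v k * θ (x k) + 2 * M * |v k|) := by
          rw [Finset.mul_sum]
          exact Finset.sum_le_sum fun k hk => hlow k (Finset.mem_range.1 hk)
      _ ≤ θ (J v) + 2 * M * ‖v‖ := sum_le_hasSum _ (fun k _ => hnonneg k) hsum
      _ ≤ 2 * ‖J v‖ + 2 * M * ‖v‖ := by linarith
  have := le_of_tendsto_of_tendsto' (hnorm.tendsto_sum_nat.const_mul _) tendsto_const_nhds key
  linarith

theorem not_containsNoL1_of_forall_nonempty_inter_sideRay [CompleteSpace X] {x : ℕ → X}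
    {M α β : ℝ} (hαβ : α < β) (hx : ∀ n, ‖x n‖ ≤ M)
    (hind : ∀ n (s : Fin n → Bool),
      (⋂ i : Fin n, (fun φ : DualBall X => φ.1 (x i)) ⁻¹' sideRay α β (s i)).Nonempty) :
    ¬ContainsNoL1 X := by
  obtain ⟨J, hJ⟩ := exists_l1_hasSum_smul hx
  refine not_not.2 ⟨J, (β - α) / 2, by linarith, fun v => ?_⟩
  linarith [mul_norm_le_of_forall_nonempty_inter_sideRay hx hind hJ v]

theorem continuous_dualBall_apply (x : X) : Continuous fun φ : DualBall X => φ.1 x :=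
  (WeakDual.eval_continuous x).comp continuous_subtype_val

theorem exists_norm_le_forall_measure_inter_sideRay_ne_zero
    {μ : Measure (DualBall X)} [IsFiniteMeasure μ] [μ.Regular]
    (F : StrongDual ℝ (StrongDual ℝ X)) {α β : ℝ} {E : Set (DualBall X)}
    (hE : ∀ C, MeasurableSet C → C ⊆ E → μ C ≠ 0 →
      ∀ b, ∃ φ ∈ C, evalBall F φ ∈ sideRay α β b)
    {ι : Type*} [Fintype ι] {C : ι → Set (DualBall X)} (hCm : ∀ i, MeasurableSet (C i))
    (hCE : ∀ i, C i ⊆ E) (hC0 : ∀ i, μ (C i) ≠ 0) :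
    ∃ x : X, ‖x‖ ≤ ‖F‖ ∧
      ∀ i b, μ (C i ∩ (fun φ : DualBall X => φ.1 x) ⁻¹' sideRay α β b) ≠ 0 := by
  have hpick : ∀ i b, ∃ φ ∈ C i ∩ (μ.restrict (C i)).support, evalBall F φ ∈ sideRay α β b :=
    fun i => hE _ ((hCm i).inter Measure.isClosed_support.measurableSet)
      (Set.inter_subset_left.trans (hCE i))
      (by rw [measure_inter_support_restrict (measure_ne_top μ _)]; exact hC0 i)
  choose p hpC hpF using hpick
  let U : Set (ι × Bool → ℝ) := ⋂ j : ι × Bool, (fun v => v j) ⁻¹' sideRay α β j.2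
  have hU : IsOpen U := isOpen_iInter_of_finite fun j =>
    (isOpen_sideRay α β j.2).preimage (continuous_apply j)
  have hFU : (fun j : ι × Bool => evalBall F (p j.1 j.2)) ∈ U :=
    Set.mem_iInter.2 fun j => hpF j.1 j.2
  obtain ⟨_, hxU, x, hx, rfl⟩ := _root_.mem_closure_iff.1 (mem_closure_image_closedBall_norm F
    fun j : ι × Bool => WeakDual.toStrongDual (p j.1 j.2).1) U hU hFU
  refine ⟨x, mem_closedBall_zero_iff.1 hx, fun i b => ?_⟩
  have hnhds : (fun φ : DualBall X => φ.1 x) ⁻¹' sideRay α β b ∈ 𝓝 (p i b) :=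
    ((isOpen_sideRay α β b).preimage (continuous_dualBall_apply x)).mem_nhds
      (Set.mem_iInter.1 hxU (i, b))
  have := ((Measure.mem_support_iff_forall _).1 (hpC i b).2 _ hnhds).ne'
  rwa [Measure.restrict_apply' (hCm i), Set.inter_comm] at this

theorem exists_seq_forall_measure_cell_ne_zero
    {μ : Measure (DualBall X)} [IsFiniteMeasure μ] [μ.Regular]
    (F : StrongDual ℝ (StrongDual ℝ X)) {α β : ℝ} {E : Set (DualBall X)}
    (hEm : MeasurableSet E) (hE0 : μ E ≠ 0)
    (hE : ∀ C, MeasurableSet C → C ⊆ E → μ C ≠ 0 →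
      ∀ b, ∃ φ ∈ C, evalBall F φ ∈ sideRay α β b) :
    ∃ x : ℕ → X, (∀ n, ‖x n‖ ≤ ‖F‖) ∧ ∀ n (s : Fin n → Bool),
      μ (E ∩ ⋂ i : Fin n, (fun φ : DualBall X => φ.1 (x i)) ⁻¹' sideRay α β (s i)) ≠ 0 := by
  let cell : ∀ {n}, (Fin n → X) → (Fin n → Bool) → Set (DualBall X) := fun v s =>
    E ∩ ⋂ i, (fun φ : DualBall X => φ.1 (v i)) ⁻¹' sideRay α β (s i)
  have hcell_snoc : ∀ {n} (v : Fin n → X) a (s : Fin (n + 1) → Bool),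
      cell (Fin.snoc v a) s = cell v (Fin.init s) ∩
        (fun φ : DualBall X => φ.1 a) ⁻¹' sideRay α β (s (Fin.last n)) := by
    intro n v a s
    ext φ
    simp [cell, Fin.forall_fin_succ', Fin.init, and_assoc]
  have hstep : ∀ n (v : Fin n → X), ((∀ i, ‖v i‖ ≤ ‖F‖) ∧ ∀ s, μ (cell v s) ≠ 0) →
      ∃ a, (∀ i, ‖(Fin.snoc v a : Fin (n + 1) → X) i‖ ≤ ‖F‖) ∧
        ∀ s, μ (cell (Fin.snoc v a) s) ≠ 0 := by
    rintro n v ⟨hvF, hv⟩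
    obtain ⟨a, ha, hcell⟩ := exists_norm_le_forall_measure_inter_sideRay_ne_zero F hE
      (C := fun s => cell v s)
      (fun s => hEm.inter (MeasurableSet.iInter fun i =>
        ((isOpen_sideRay α β _).preimage (continuous_dualBall_apply _)).measurableSet))
      (fun s => Set.inter_subset_left) hv
    refine ⟨a, Fin.lastCases (by simpa using ha) (fun j => by simpa using hvF j), fun s => ?_⟩
    rw [hcell_snoc]
    exact hcell _ _
  obtain ⟨x, hx⟩ := exists_seq_forall_fin_of_snoc _
    ⟨fun i => i.elim0, fun s => by simpa [cell] using hE0⟩ hstep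
  exact ⟨x, fun n => (hx (n + 1)).1 (Fin.last n), fun n => (hx n).2⟩

theorem aemeasurable_evalBall_of_containsNoL1 [CompleteSpace X] (hX : ContainsNoL1 X)
    (F : StrongDual ℝ (StrongDual ℝ X)) (μ : Measure (DualBall X)) [IsFiniteMeasure μ]
    [μ.Regular] : AEMeasurable (evalBall F) μ := by
  by_contra hF
  obtain ⟨α, β, hαβ, E, hEm, hE0, hE⟩ := exists_oscillation_set_of_not_aemeasurable hF
  obtain ⟨x, hx, hcell⟩ := exists_seq_forall_measure_cell_ne_zero F hEm hE0
    fun C hC hCE hC0 => Bool.forall_bool.2 (hE C hC hCE hC0)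
  exact not_containsNoL1_of_forall_nonempty_inter_sideRay hαβ hx
    (fun n s => (nonempty_of_measure_ne_zero (hcell n s)).mono Set.inter_subset_right) hX

theorem memUM_of_separable_range_general
    [CompleteSpace X]
    (hX : ContainsNoL1 X)
    (T : StrongDual ℝ X →L[ℝ] Y)
    (hT : TopologicalSpace.IsSeparable (Set.range T)) :
    MemUM T := by
  intro μ _ _
  borelize Y
  have hrange : Set.range (evalBall T) ⊆ Set.range T := Set.range_subset_iff.2 fun φ => ⟨_, rfl⟩
  refine aestronglyMeasurable_iff_nullMeasurable_separable.2
    ⟨?_, _, hT, ae_of_all _ fun φ => hrange ⟨φ, rfl⟩⟩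
  exact measurable_of_forall_strongDual_measurable (α := NullMeasurableSpace _ μ)
    (hT.mono hrange) fun L =>
      (aemeasurable_evalBall_of_containsNoL1 hX (L.comp T) μ).nullMeasurable

/-- If `X` contains no subspace isomorphic to `ℓ_1`, then every operator `T : X* → Y`
with separable range belongs to `UM(X*,Y)`. -/
theorem memUM_of_separable_range
    [CompleteSpace X] [CompleteSpace Y]
    (hX : ContainsNoL1 X)
    (T : StrongDual ℝ X →L[ℝ] Y)
    (hT : TopologicalSpace.IsSeparable (Set.range T)) :
    MemUM T :=
  memUM_of_separable_range_general hX T hT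
end

section
/- Let X and Y be Banach spaces and suppose Y has the bounded approximation property. If T ∈ L(X*,Y) is (weak*-to-weak) continuous and has separable range, then T is affine Baire-1, i.e., there is a sequence (T_n) of finite rank (weak*-to-norm continuous) operators in X ε Y such that ‖T_n(x*) − T(x*)‖_Y → 0 for every x* ∈ X*. -/
/-!
On the finite-dimensional range of a finite rank operator `R` the weak and norm topologies
agree, so `R ∘ T` is weak*-to-norm continuous.  The separable range of `T` lies in the closure
of a sequence `(y k)`, and the bounded approximation property gives finite rank `Rₙ` with
`‖Rₙ‖ ≤ λ` and `‖Rₙ (y k) - y k‖ ≤ 1/(n+1)` for `k ≤ n`.  Being uniformly bounded, `(Rₙ)` is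
equicontinuous, so `Rₙ y → y` extends from the sequence to its closure, hence to every `T x*`.
-/

open MeasureTheory Filter Topology

variable {X Y Z : Type*} [NormedAddCommGroup X] [NormedSpace ℝ X]
  [NormedAddCommGroup Y] [NormedSpace ℝ Y] [NormedAddCommGroup Z] [NormedSpace ℝ Z]

/-- `Y` has the bounded approximation property: for some `λ ≥ 1`, every norm-compact set
can be `ε`-approximated by a finite rank operator of norm at most `λ`. -/
def HasBAP (Y : Type*) [NormedAddCommGroup Y] [NormedSpace ℝ Y] : Prop :=
  ∃ lam : ℝ, 1 ≤ lam ∧ ∀ (C : Set Y), IsCompact C → ∀ ε : ℝ, 0 < ε →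
    ∃ R : Y →L[ℝ] Y, FiniteDimensional ℝ (LinearMap.range (R : Y →ₗ[ℝ] Y)) ∧
      ‖R‖ ≤ lam ∧ ∀ y ∈ C, ‖R y - y‖ ≤ ε

section FiniteRank

variable {E F : Type*} [NormedAddCommGroup E] [NormedSpace ℝ E]
  [NormedAddCommGroup F] [NormedSpace ℝ F]

theorem ContinuousLinearMap.continuous_comp_toWeakSpace_symm_of_finiteDimensional_range
    (R : E →L[ℝ] F) [FiniteDimensional ℝ (LinearMap.range (R : E →ₗ[ℝ] F))] :
    Continuous fun y : WeakSpace ℝ E => R ((toWeakSpace ℝ E).symm y) := by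
  let G := LinearMap.range (R : E →ₗ[ℝ] F)
  have : FiniteDimensional ℝ (WeakSpace ℝ G) := (toWeakSpace ℝ G).finiteDimensional
  have hG : Continuous (toWeakSpace ℝ G).symm :=
    (toWeakSpace ℝ G).symm.toLinearMap.continuous_of_finiteDimensional
  let Rc : E →L[ℝ] G := R.codRestrict G (LinearMap.mem_range_self (R : E →ₗ[ℝ] F))
  exact continuous_subtype_val.comp (hG.comp (WeakSpace.map Rc).continuous)

end FiniteRank

theorem memEps_comp_of_finiteDimensional_range (R : Y →L[ℝ] Z)
    [FiniteDimensional ℝ (LinearMap.range (R : Y →ₗ[ℝ] Z))] (T : StrongDual ℝ X →L[ℝ] Y)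
    (hT : Continuous fun φ : WeakDual ℝ X =>
      toWeakSpaceCLM ℝ Y (T (WeakDual.toStrongDual φ))) :
    MemEps (R.comp T) :=
  R.continuous_comp_toWeakSpace_symm_of_finiteDimensional_range.comp
    (hT.comp continuous_subtype_val)

section PointwiseConvergence

variable {ι E F : Type*} [NormedAddCommGroup E] [NormedSpace ℝ E]
  [NormedAddCommGroup F] [NormedSpace ℝ F]

theorem ContinuousLinearMap.tendsto_apply_of_mem_closure_of_norm_le {l : Filter ι}
    {R : ι → E →L[ℝ] F} {C : ℝ} (hR : ∀ i, ‖R i‖ ≤ C) (S : E →L[ℝ] F) {s : Set E}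
    (hs : ∀ y ∈ s, Tendsto (fun i => R i y) l (𝓝 (S y))) {y : E} (hy : y ∈ closure s) :
    Tendsto (fun i => R i y) l (𝓝 (S y)) := by
  have hbdd : ∃ C, ∀ i, ‖R i‖ ≤ C := ⟨C, hR⟩
  have hequi : Equicontinuous ((↑) ∘ R : ι → E → F) :=
    ((NormedSpace.equicontinuous_TFAE R).out 5 1).mp hbdd
  exact closure_minimal hs (hequi.isClosed_setOfPred_tendsto S.continuous) hy

end PointwiseConvergence

theorem HasBAP.exists_finiteRank_tendsto_of_seq (hY : HasBAP Y) (y : ℕ → Y) :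
    ∃ lam : ℝ, ∃ R : ℕ → Y →L[ℝ] Y,
      (∀ n, FiniteDimensional ℝ (LinearMap.range (R n : Y →ₗ[ℝ] Y)) ∧ ‖R n‖ ≤ lam) ∧
      ∀ k, Tendsto (fun n => R n (y k)) atTop (𝓝 (y k)) := by
  obtain ⟨lam, -, hbap⟩ := hY
  have hR : ∀ n : ℕ, ∃ R : Y →L[ℝ] Y,
      (FiniteDimensional ℝ (LinearMap.range (R : Y →ₗ[ℝ] Y)) ∧ ‖R‖ ≤ lam) ∧
      ∀ k ≤ n, ‖R (y k) - y k‖ ≤ 1 / ((n : ℝ) + 1) := by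
    intro n
    obtain ⟨R, hRfin, hRnorm, hRy⟩ := hbap _ ((Set.finite_Iic n).image y).isCompact
      (1 / ((n : ℝ) + 1)) Nat.one_div_pos_of_nat
    exact ⟨R, ⟨hRfin, hRnorm⟩, fun k hk => hRy _ ⟨k, hk, rfl⟩⟩
  choose R hRbound hRy using hR
  refine ⟨lam, R, hRbound, fun k => tendsto_iff_norm_sub_tendsto_zero.mpr ?_⟩
  exact squeeze_zero' (Eventually.of_forall fun _ => norm_nonneg _)
    (eventually_atTop.mpr ⟨k, fun n hn => hRy n k hn⟩) tendsto_one_div_add_atTop_nhds_zero_nat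

theorem HasBAP.exists_finiteRank_tendsto_of_isSeparable (hY : HasBAP Y) {s : Set Y}
    (hs : TopologicalSpace.IsSeparable s) :
    ∃ R : ℕ → Y →L[ℝ] Y, (∀ n, FiniteDimensional ℝ (LinearMap.range (R n : Y →ₗ[ℝ] Y))) ∧
      ∀ v ∈ s, Tendsto (fun n => R n v) atTop (𝓝 v) := by
  obtain ⟨c, hc, hsc⟩ := hs
  obtain ⟨y, hcy⟩ := Set.countable_iff_exists_subset_range.mp hc
  obtain ⟨lam, R, hRbound, hRy⟩ := hY.exists_finiteRank_tendsto_of_seq y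
  refine ⟨R, fun n => (hRbound n).1, fun v hv => ?_⟩
  have hv' : v ∈ closure (Set.range y) := closure_mono hcy (hsc hv)
  simpa using ContinuousLinearMap.tendsto_apply_of_mem_closure_of_norm_le
    (fun n => (hRbound n).2) (ContinuousLinearMap.id ℝ Y)
    (by simpa using hRy) hv'

theorem affineBaire1_of_weakStar_to_weak_continuous_of_separable_range_general
    (hY : HasBAP Y)
    (T : StrongDual ℝ X →L[ℝ] Y)
    (hTcont : Continuous fun φ : WeakDual ℝ X =>
      toWeakSpaceCLM ℝ Y (T (WeakDual.toStrongDual φ)))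
    (hTsep : TopologicalSpace.IsSeparable (Set.range T)) :
    ∃ Tseq : ℕ → (StrongDual ℝ X →L[ℝ] Y),
      (∀ n, FiniteDimensional ℝ
          (LinearMap.range (Tseq n : StrongDual ℝ X →ₗ[ℝ] Y)) ∧ MemEps (Tseq n)) ∧
      SOTConvergesTo Tseq T := by
  obtain ⟨R, hRfin, hRT⟩ := hY.exists_finiteRank_tendsto_of_isSeparable hTsep
  refine ⟨fun n => (R n).comp T, fun n => ?_, fun x' => ?_⟩
  · have := hRfin n
    exact ⟨Submodule.finiteDimensional_of_le (LinearMap.range_comp_le_range _ _),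
      memEps_comp_of_finiteDimensional_range (R n) T hTcont⟩
  · exact tendsto_iff_norm_sub_tendsto_zero.mp (hRT _ ⟨x', rfl⟩)

/-- Suppose `Y` has the bounded approximation property.  If `T : X* → Y` is
(weak*-to-weak) continuous and has separable range, then `T` is affine Baire-1: it is the
SOT-limit of a sequence of finite rank operators belonging to the ε-product `X ε Y`. -/
theorem affineBaire1_of_weakStar_to_weak_continuous_of_separable_range
    [CompleteSpace X] [CompleteSpace Y]
    (hY : HasBAP Y)
    (T : StrongDual ℝ X →L[ℝ] Y)
    (hTcont : Continuous fun φ : WeakDual ℝ X =>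
      toWeakSpaceCLM ℝ Y (T (WeakDual.toStrongDual φ)))
    (hTsep : TopologicalSpace.IsSeparable (Set.range T)) :
    ∃ Tseq : ℕ → (StrongDual ℝ X →L[ℝ] Y),
      (∀ n, FiniteDimensional ℝ
          (LinearMap.range (Tseq n : StrongDual ℝ X →ₗ[ℝ] Y)) ∧ MemEps (Tseq n)) ∧
      SOTConvergesTo Tseq T :=
  affineBaire1_of_weakStar_to_weak_continuous_of_separable_range_general hY T hTcont hTsep
end

section
/- Let X, Y, Z be Banach spaces and 1 ≤ p < ∞. Let Σ be a σ-algebra on B_{X*} and let U be a closed subspace of L(X*,Y) such that for every T ∈ U the function x* ↦ ‖T(x*)‖_Y on B_{X*} is Σ-measurable. Let S : U → Z be an (ℓ^s_p,ℓ_p)-summing operator. Then there exist a constant K ≥ 0 and a positive linear functional φ on the Banach space B(Σ) of bounded Σ-measurable real-valued functions on B_{X*} (with the supremum norm) satisfying φ(1) = 1 (equivalently, a finitely additive probability ν on Σ with φ(h) = ∫ h dν), such that ‖S(T)‖_Z^p ≤ K^p · φ(x* ↦ ‖T(x*)‖_Y^p) for every T ∈ U. -/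
open MeasureTheory

/-- The closed unit ball of the dual of `X` (as a plain set, carrying a given
σ-algebra `Σ`). -/
abbrev Ball (X : Type*) [NormedAddCommGroup X] [NormedSpace ℝ X] : Type _ :=
  {x' : StrongDual ℝ X // ‖x'‖ ≤ 1}

/-- `B(Σ)`: the space of bounded `Σ`-measurable real-valued functions on `α`,
as a linear subspace of `α → ℝ`. -/
def BddMeasFuncs (α : Type*) [MeasurableSpace α] : Submodule ℝ (α → ℝ) where
  carrier := {f | Measurable f ∧ ∃ M : ℝ, ∀ x, |f x| ≤ M}
  add_mem' := by
    rintro f g ⟨hf, M, hM⟩ ⟨hg, N, hN⟩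
    exact ⟨hf.add hg, M + N, fun x =>
      (abs_add_le _ _).trans (add_le_add (hM x) (hN x))⟩
  zero_mem' := ⟨measurable_const, 0, fun x => by simp⟩
  smul_mem' := by
    rintro c f ⟨hf, M, hM⟩
    refine ⟨hf.const_smul c, |c| * M, fun x => ?_⟩
    simp only [Pi.smul_apply, smul_eq_mul, abs_mul]
    exact mul_le_mul_of_nonneg_left (hM x) (abs_nonneg c)

/-!
The functions `K^p ‖T(·)‖^p - ‖S T‖^p` (`T ∈ U`) generate a convex cone `C` of functions on
`B_{X*}`. Since `c • (K^p ‖T(·)‖^p - ‖S T‖^p)` is the function of `c^{1/p} • T`, every element of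
`C` is a finite sum of such functions, and the summing inequality says exactly that no element of
`C` is bounded above by a negative constant. So the cone of those `f ∈ B(Σ)` that dominate some
element of `C` contains no negative constant, and M. Riesz's extension theorem extends
`c • 1 ↦ c` to a linear functional on `B(Σ)` that is nonnegative on this cone. That functional is
positive because `0 ∈ C`, and nonnegative on `K^p ‖T(·)‖^p - ‖S T‖^p`, which is the domination.
-/

theorem le_of_rpow_le_mul_iSup_rpow {ι : Type*} [Nonempty ι] {p K σ B : ℝ} {A : ι → ℝ}
    (hp : 0 < p) (hK : 0 ≤ K) (hσ : 0 ≤ σ) (hA : ∀ i, 0 ≤ A i)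
    (h : σ ^ (1 / p) ≤ K * ⨆ i, A i ^ (1 / p)) (hB : ∀ i, K ^ p * A i ≤ B) : σ ≤ B := by
  have hp' : 0 < 1 / p := one_div_pos.mpr hp
  have hKp : 0 ≤ K ^ p := Real.rpow_nonneg hK p
  have hB₀ : 0 ≤ B := (mul_nonneg hKp (hA (Classical.arbitrary ι))).trans (hB _)
  have hroot : ∀ i, K * A i ^ (1 / p) ≤ B ^ (1 / p) := fun i => by
    calc K * A i ^ (1 / p) = (K ^ p * A i) ^ (1 / p) := by
          rw [Real.mul_rpow hKp (hA i), one_div, Real.rpow_rpow_inv hK hp.ne']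
      _ ≤ B ^ (1 / p) := Real.rpow_le_rpow (mul_nonneg hKp (hA i)) (hB i) hp'.le
  have hsup : K * ⨆ i, A i ^ (1 / p) ≤ B ^ (1 / p) := by
    rw [Real.mul_iSup_of_nonneg hK]
    exact ciSup_le hroot
  exact (Real.rpow_le_rpow_iff hσ hB₀ hp').mp (h.trans hsup)

theorem Submodule.exists_normalized_functional_nonneg_of_pointedCone {α : Type*} [Nonempty α]
    (V : Submodule ℝ (α → ℝ)) (hone : (1 : α → ℝ) ∈ V)
    (hbdd : ∀ f ∈ V, BddBelow (Set.range f))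
    (C : PointedCone ℝ (α → ℝ)) (hC : ∀ h ∈ C, ∀ c : ℝ, (∀ x, h x ≤ c) → 0 ≤ c) :
    ∃ φ : V →ₗ[ℝ] ℝ, φ ⟨1, hone⟩ = 1 ∧ ∀ f : V, ∀ h ∈ C, h ≤ (f : α → ℝ) → 0 ≤ φ f := by
  let one : V := ⟨1, hone⟩
  have one_ne : one ≠ 0 := fun h => by
    simpa [one] using congrFun (congrArg Subtype.val h) (Classical.arbitrary α)
  let s : PointedCone ℝ V :=
    { carrier := {f | ∃ h ∈ C, h ≤ (f : α → ℝ)}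
      zero_mem' := ⟨0, C.zero_mem, le_rfl⟩
      add_mem' := fun ⟨h₁, hh₁, hle₁⟩ ⟨h₂, hh₂, hle₂⟩ =>
        ⟨h₁ + h₂, C.add_mem hh₁ hh₂, add_le_add hle₁ hle₂⟩
      smul_mem' := fun c _ ⟨h, hh, hle⟩ =>
        ⟨c • h, Submodule.smul_mem C c hh, smul_le_smul_of_nonneg_left hle c.2⟩ }
  let φ₀ : V →ₗ.[ℝ] ℝ := LinearPMap.mkSpanSingleton one 1 one_ne
  have nonneg : ∀ f : φ₀.domain, (f : V) ∈ s → 0 ≤ φ₀ f := by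
    rintro ⟨_, hf⟩ ⟨h, hh, hle⟩
    obtain ⟨c, rfl⟩ := Submodule.mem_span_singleton.mp hf
    rw [LinearPMap.mkSpanSingleton'_apply, smul_eq_mul, mul_one]
    exact hC h hh c fun x => by simpa [one] using hle x
  have dense : ∀ f : V, ∃ g : φ₀.domain, (g : V) + f ∈ s := by
    intro f
    obtain ⟨M, hM⟩ := hbdd f f.2
    refine ⟨⟨(-M) • one, Submodule.smul_mem _ _ (Submodule.mem_span_singleton_self one)⟩,
      0, C.zero_mem, fun x => ?_⟩
    simpa [one, add_comm] using hM ⟨x, rfl⟩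
  obtain ⟨φ, hφ_ext, hφ_nonneg⟩ := riesz_extension s φ₀ nonneg dense
  refine ⟨φ, ?_, fun f h hh hle => hφ_nonneg f ⟨h, hh, hle⟩⟩
  rw [hφ_ext ⟨one, Submodule.mem_span_singleton_self one⟩]
  exact LinearPMap.mkSpanSingleton_apply ℝ ℝ one_ne 1

section BddMeasFuncs

variable {α : Type*} [MeasurableSpace α]

theorem one_mem_bddMeasFuncs : (1 : α → ℝ) ∈ BddMeasFuncs α :=
  ⟨measurable_const, 1, fun _ => by simp⟩

theorem bddBelow_range_of_mem_bddMeasFuncs {f : α → ℝ} (hf : f ∈ BddMeasFuncs α) :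
    BddBelow (Set.range f) := by
  obtain ⟨-, M, hM⟩ := hf
  exact ⟨-M, by rintro _ ⟨x, rfl⟩; exact neg_le_of_abs_le (hM x)⟩

end BddMeasFuncs

theorem norm_apply_rpow_mem_bddMeasFuncs {X Y : Type*} [NormedAddCommGroup X] [NormedSpace ℝ X]
    [NormedAddCommGroup Y] [NormedSpace ℝ Y] [MeasurableSpace (Ball X)] {p : ℝ} (hp : 0 ≤ p)
    (T : StrongDual ℝ X →L[ℝ] Y) (hT : Measurable fun x : Ball X => ‖T x.1‖) :
    (fun x : Ball X => ‖T x.1‖ ^ p) ∈ BddMeasFuncs (Ball X) := by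
  refine ⟨(Real.continuous_rpow_const hp).measurable.comp hT, ‖T‖ ^ p, fun x => ?_⟩
  rw [abs_of_nonneg (Real.rpow_nonneg (norm_nonneg _) _)]
  have hTx : ‖T x.1‖ ≤ ‖T‖ := (T.le_opNorm _).trans (mul_le_of_le_one_right (norm_nonneg _) x.2)
  exact Real.rpow_le_rpow (norm_nonneg _) hTx hp

section Pietsch

variable {X Y Z : Type*} [NormedAddCommGroup X] [NormedSpace ℝ X]
  [NormedAddCommGroup Y] [NormedSpace ℝ Y] [NormedAddCommGroup Z] [NormedSpace ℝ Z]
  {U : Submodule ℝ (StrongDual ℝ X →L[ℝ] Y)}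

instance : Nonempty (Ball X) := ⟨⟨0, by simp⟩⟩

noncomputable def pietschTerm (p K : ℝ) (S : U →ₗ[ℝ] Z) (T : U) : Ball X → ℝ :=
  fun x => K ^ p * ‖(T : StrongDual ℝ X →L[ℝ] Y) x‖ ^ p - ‖S T‖ ^ p

theorem pietschTerm_rpow_smul {p K c : ℝ} (hp : 0 < p) (hc : 0 ≤ c) (S : U →ₗ[ℝ] Z) (T : U) :
    pietschTerm p K S (c ^ (1 / p) • T) = c • pietschTerm p K S T := by
  have hscale : ∀ r : ℝ, 0 ≤ r → (c ^ (1 / p) * r) ^ p = c * r ^ p := fun r hr => by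
    rw [Real.mul_rpow (Real.rpow_nonneg hc _) hr, one_div, Real.rpow_inv_rpow hc hp.ne']
  ext x
  simp only [pietschTerm, Submodule.coe_smul, FunLike.coe_smul, Pi.smul_apply,
    map_smul, norm_smul, Real.norm_of_nonneg (Real.rpow_nonneg hc _), hscale _ (norm_nonneg _),
    smul_eq_mul]
  ring

theorem nonneg_of_sum_pietschTerm_le {p K c : ℝ} (hp : 0 < p) (hK : 0 ≤ K) (S : U →ₗ[ℝ] Z)
    {n : ℕ} (T : Fin n → U)
    (hST : (∑ i, ‖S (T i)‖ ^ p) ^ (1 / p) ≤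
      K * ⨆ x : Ball X, (∑ i, ‖(T i : StrongDual ℝ X →L[ℝ] Y) x.1‖ ^ p) ^ (1 / p))
    (hc : ∀ x, ∑ i, pietschTerm p K S (T i) x ≤ c) : 0 ≤ c := by
  have key := le_of_rpow_le_mul_iSup_rpow hp hK
    (Finset.sum_nonneg fun i _ => Real.rpow_nonneg (norm_nonneg _) p)
    (fun x => Finset.sum_nonneg fun i _ => Real.rpow_nonneg (norm_nonneg _) p) hST
    (B := c + ∑ i, ‖S (T i)‖ ^ p) fun x => by
      have := hc x
      simp only [pietschTerm, Finset.sum_sub_distrib, ← Finset.mul_sum] at this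
      linarith
  linarith

def pietschCone (p K : ℝ) (S : U →ₗ[ℝ] Z) : PointedCone ℝ (Ball X → ℝ) :=
  PointedCone.hull ℝ (Set.range (pietschTerm p K S))

theorem exists_eq_sum_pietschTerm_of_mem_pietschCone {p K : ℝ} (hp : 0 < p) {S : U →ₗ[ℝ] Z}
    {h : Ball X → ℝ} (hh : h ∈ pietschCone p K S) :
    ∃ (n : ℕ) (T : Fin n → U), h = ∑ i, pietschTerm p K S (T i) := by
  induction hh using Submodule.span_induction with
  | mem _ hT =>
    obtain ⟨T, rfl⟩ := hT
    exact ⟨1, fun _ => T, by simp⟩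
  | zero => exact ⟨0, Fin.elim0, by simp⟩
  | add _ _ _ _ ih₁ ih₂ =>
    obtain ⟨n₁, T₁, rfl⟩ := ih₁
    obtain ⟨n₂, T₂, rfl⟩ := ih₂
    exact ⟨n₁ + n₂, Fin.append T₁ T₂, by simp [Fin.sum_univ_add]⟩
  | smul c _ _ ih =>
    obtain ⟨n, T, rfl⟩ := ih
    refine ⟨n, fun i => (c : ℝ) ^ (1 / p) • T i, ?_⟩
    simp only [pietschTerm_rpow_smul hp c.2, Finset.smul_sum]
    rfl

theorem nonneg_of_forall_le_of_mem_pietschCone {p K : ℝ} (hp : 0 < p) (hK : 0 ≤ K) {S : U →ₗ[ℝ] Z}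
    (hS : ∀ (n : ℕ) (T : Fin n → U), (∑ i, ‖S (T i)‖ ^ p) ^ (1 / p) ≤
      K * ⨆ x : Ball X, (∑ i, ‖(T i : StrongDual ℝ X →L[ℝ] Y) x.1‖ ^ p) ^ (1 / p))
    {h : Ball X → ℝ} (hh : h ∈ pietschCone p K S) {c : ℝ} (hc : ∀ x, h x ≤ c) : 0 ≤ c := by
  obtain ⟨n, T, rfl⟩ := exists_eq_sum_pietschTerm_of_mem_pietschCone hp hh
  exact nonneg_of_sum_pietschTerm_le hp hK S T (hS n T) fun x => by simpa using hc x

end Pietsch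

theorem finitelyAdditive_pietsch_domination_general
    {X Y Z : Type*} [NormedAddCommGroup X] [NormedSpace ℝ X]
    [NormedAddCommGroup Y] [NormedSpace ℝ Y]
    [NormedAddCommGroup Z] [NormedSpace ℝ Z]
    (p : ℝ) (hp : 1 ≤ p)
    (m : MeasurableSpace (Ball X))
    (U : Submodule ℝ (StrongDual ℝ X →L[ℝ] Y))
    (hmeas : ∀ T ∈ U, Measurable fun x : Ball X => ‖T x.1‖)
    (S : U →L[ℝ] Z)
    (hS : ∃ K : ℝ, 0 ≤ K ∧ ∀ (n : ℕ) (T : Fin n → U),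
      (∑ i, ‖S (T i)‖ ^ p) ^ (1/p) ≤
        K * ⨆ x : Ball X,
          (∑ i, ‖(T i : StrongDual ℝ X →L[ℝ] Y) x.1‖ ^ p) ^ (1/p)) :
    ∃ K : ℝ, 0 ≤ K ∧ ∃ φ : BddMeasFuncs (Ball X) →ₗ[ℝ] ℝ,
      (∀ f : BddMeasFuncs (Ball X), (∀ x, 0 ≤ f.1 x) → 0 ≤ φ f) ∧
      (∃ one : BddMeasFuncs (Ball X), (∀ x, one.1 x = 1) ∧ φ one = 1) ∧
      ∀ T : U, ∃ g : BddMeasFuncs (Ball X),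
        (∀ x : Ball X, g.1 x = ‖(T : StrongDual ℝ X →L[ℝ] Y) x.1‖ ^ p) ∧
        ‖S T‖ ^ p ≤ K ^ p * φ g := by
  obtain ⟨K, hK, hSK⟩ := hS
  have hp₀ : 0 < p := zero_lt_one.trans_le hp
  obtain ⟨φ, hφ_one, hφ_nonneg⟩ :=
    (BddMeasFuncs (Ball X)).exists_normalized_functional_nonneg_of_pointedCone
      one_mem_bddMeasFuncs (fun _ hf => bddBelow_range_of_mem_bddMeasFuncs hf)
      (pietschCone p K (S : U →ₗ[ℝ] Z))
      (fun _ hh _ hc => nonneg_of_forall_le_of_mem_pietschCone hp₀ hK hSK hh hc)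
  refine ⟨K, hK, φ, fun f hf => hφ_nonneg f 0 (zero_mem _) hf, ⟨_, fun _ => rfl, hφ_one⟩,
    fun T => ?_⟩
  let g : BddMeasFuncs (Ball X) := ⟨_, norm_apply_rpow_mem_bddMeasFuncs hp₀.le T.1 (hmeas T T.2)⟩
  refine ⟨g, fun _ => rfl, ?_⟩
  have hterm := hφ_nonneg (K ^ p • g - ‖S T‖ ^ p • ⟨1, one_mem_bddMeasFuncs⟩)
    (pietschTerm p K (S : U →ₗ[ℝ] Z) T) (PointedCone.subset_hull ⟨T, rfl⟩) fun x => by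
      simp [pietschTerm, g]
  rw [map_sub, map_smul, map_smul, hφ_one, smul_eq_mul, smul_eq_mul, mul_one] at hterm
  linarith

/-- **Finitely additive Pietsch-type domination.**  Let `Σ` be a σ-algebra on the dual
ball `B_{X*}` such that `x* ↦ ‖T(x*)‖` is `Σ`-measurable for all `T` in a closed subspace
`U` of `L(X*,Y)`, and let `S : U → Z` be `(ℓ^s_p, ℓ_p)`-summing.  Then there are `K ≥ 0`
and a positive linear functional `φ` on `B(Σ)` with `φ(1) = 1` (equivalently, a finitely
additive probability on `Σ`) such that `‖S T‖^p ≤ K^p · φ(‖T(·)‖^p)` for all `T ∈ U`. -/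
theorem finitelyAdditive_pietsch_domination
    {X Y Z : Type*} [NormedAddCommGroup X] [NormedSpace ℝ X] [CompleteSpace X]
    [NormedAddCommGroup Y] [NormedSpace ℝ Y] [CompleteSpace Y]
    [NormedAddCommGroup Z] [NormedSpace ℝ Z] [CompleteSpace Z]
    (p : ℝ) (hp : 1 ≤ p)
    (m : MeasurableSpace (Ball X))
    (U : Submodule ℝ (StrongDual ℝ X →L[ℝ] Y))
    (hUclosed : IsClosed (U : Set (StrongDual ℝ X →L[ℝ] Y)))
    (hmeas : ∀ T ∈ U, Measurable fun x : Ball X => ‖T x.1‖)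
    (S : U →L[ℝ] Z)
    (hS : ∃ K : ℝ, 0 ≤ K ∧ ∀ (n : ℕ) (T : Fin n → U),
      (∑ i, ‖S (T i)‖ ^ p) ^ (1/p) ≤
        K * ⨆ x : Ball X,
          (∑ i, ‖(T i : StrongDual ℝ X →L[ℝ] Y) x.1‖ ^ p) ^ (1/p)) :
    ∃ K : ℝ, 0 ≤ K ∧ ∃ φ : BddMeasFuncs (Ball X) →ₗ[ℝ] ℝ,
      (∀ f : BddMeasFuncs (Ball X), (∀ x, 0 ≤ f.1 x) → 0 ≤ φ f) ∧
      (∃ one : BddMeasFuncs (Ball X), (∀ x, one.1 x = 1) ∧ φ one = 1) ∧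
      ∀ T : U, ∃ g : BddMeasFuncs (Ball X),
        (∀ x : Ball X, g.1 x = ‖(T : StrongDual ℝ X →L[ℝ] Y) x.1‖ ^ p) ∧
        ‖S T‖ ^ p ≤ K ^ p * φ g :=
  finitelyAdditive_pietsch_domination_general p hp m U hmeas S hS
end

section
/- Let X, Y, Z, E, F be Banach spaces, 1 < p, q < ∞ with 1/p + 1/q ≤ 1, define r by 1/r = 1/p + 1/q, and suppose Z* is isometrically identified with a closed subspace of L(E*,F). Let U be a closed subspace of L(X*,Y). If an operator S : U → Z factors as S = S_1 ∘ S_2 where S_2 : U → W is (ℓ^s_p,ℓ_p)-summing and the adjoint S_1* : Z* → W* of S_1 : W → Z is (ℓ^s_q,ℓ_q)-summing, then S is (ℓ^s_p,ℓ^s_q)-dominated. -/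
open MeasureTheory Filter Topology

variable {X Y Z : Type*} [NormedAddCommGroup X] [NormedSpace ℝ X]
  [NormedAddCommGroup Y] [NormedSpace ℝ Y] [NormedAddCommGroup Z] [NormedSpace ℝ Z]

/-! Pointwise `|z'ᵢ (S Tᵢ)| ≤ ‖S₂ Tᵢ‖ · ‖S₁* z'ᵢ‖`, and Hölder's inequality with
`1/r = 1/p + 1/q` bounds the `ℓ^r` norm of these products by the `ℓ^p` norm of the first
factors times the `ℓ^q` norm of the second; the two summing hypotheses bound those. -/

namespace Real

theorem Lr_le_Lp_mul_Lq_of_nonneg {ι : Type*} (s : Finset ι) {f g : ι → ℝ} {p q r : ℝ}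
    (hpqr : p.HolderTriple q r) (hf : ∀ i, 0 ≤ f i) (hg : ∀ i, 0 ≤ g i) :
    (∑ i ∈ s, (f i * g i) ^ r) ^ (1 / r) ≤
      (∑ i ∈ s, f i ^ p) ^ (1 / p) * (∑ i ∈ s, g i ^ q) ^ (1 / q) := by
  lift f to ι → NNReal using hf
  lift g to ι → NNReal using hg
  simpa using NNReal.coe_le_coe.2 (NNReal.Lr_le_Lp_mul_Lq s f g hpqr)

end Real

theorem ContinuousLinearMap.abs_apply_comp_le {E F : Type*}
    [NormedAddCommGroup E] [NormedSpace ℝ E] [NormedAddCommGroup F] [NormedSpace ℝ F]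
    (z : StrongDual ℝ F) (A : E →L[ℝ] F) (x : E) :
    |z (A x)| ≤ ‖x‖ * ‖z.comp A‖ := by
  rw [mul_comm, ← Real.norm_eq_abs]
  exact (z.comp A).le_opNorm x

theorem lpq_dominated_of_factorization_general
    {Z E F W : Type*}
    [NormedAddCommGroup Z] [NormedSpace ℝ Z]
    [NormedAddCommGroup E] [NormedSpace ℝ E]
    [NormedAddCommGroup F] [NormedSpace ℝ F]
    [NormedAddCommGroup W] [NormedSpace ℝ W]
    (p q r : ℝ) (hp : 1 < p) (hq : 1 < q)
    (hr : 1/r = 1/p + 1/q)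
    (J : StrongDual ℝ Z →ₗᵢ[ℝ] (StrongDual ℝ E →L[ℝ] F))
    (U : Submodule ℝ (StrongDual ℝ X →L[ℝ] Y))
    (S : U →L[ℝ] Z) (S₂ : U →L[ℝ] W) (S₁ : W →L[ℝ] Z)
    (hS₂ : IsLpSumming p U S₂)
    (hS₁ : ∃ K : ℝ, 0 ≤ K ∧ ∀ (n : ℕ) (z' : Fin n → StrongDual ℝ Z),
      (∑ i, ‖(z' i).comp S₁‖ ^ q) ^ (1/q) ≤
        K * ⨆ ψ : DualBall E, (∑ i, ‖evalBall (J (z' i)) ψ‖ ^ q) ^ (1/q))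
    (hfact : ∀ T : U, S₁ (S₂ T) = S T) :
    ∃ K : ℝ, 0 ≤ K ∧ ∀ (n : ℕ) (T : Fin n → U) (z' : Fin n → StrongDual ℝ Z),
      (∑ i, |z' i (S (T i))| ^ r) ^ (1/r) ≤
        K * (⨆ φ : DualBall X,
              (∑ i, ‖evalBall (T i : StrongDual ℝ X →L[ℝ] Y) φ‖ ^ p) ^ (1/p))
          * (⨆ ψ : DualBall E, (∑ i, ‖evalBall (J (z' i)) ψ‖ ^ q) ^ (1/q)) := by
  have hpqr : p.HolderTriple q r :=
    ⟨by simpa only [one_div] using hr.symm, by linarith, by linarith⟩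
  obtain ⟨K₂, hK₂, h₂⟩ := hS₂
  obtain ⟨K₁, hK₁, h₁⟩ := hS₁
  refine ⟨K₂ * K₁, mul_nonneg hK₂ hK₁, fun n T z' => ?_⟩
  calc (∑ i, |z' i (S (T i))| ^ r) ^ (1/r)
      ≤ (∑ i, (‖S₂ (T i)‖ * ‖(z' i).comp S₁‖) ^ r) ^ (1/r) := by
        gcongr with i
        · exact hpqr.one_div_nonneg'
        · exact hpqr.nonneg'
        · rw [← hfact]; exact (z' i).abs_apply_comp_le S₁ _
    _ ≤ (∑ i, ‖S₂ (T i)‖ ^ p) ^ (1/p) * (∑ i, ‖(z' i).comp S₁‖ ^ q) ^ (1/q) :=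
        Real.Lr_le_Lp_mul_Lq_of_nonneg _ hpqr (fun _ => norm_nonneg _) (fun _ => norm_nonneg _)
    _ ≤ (K₂ * ⨆ φ : DualBall X,
            (∑ i, ‖evalBall (T i : StrongDual ℝ X →L[ℝ] Y) φ‖ ^ p) ^ (1/p)) *
          (K₁ * ⨆ ψ : DualBall E, (∑ i, ‖evalBall (J (z' i)) ψ‖ ^ q) ^ (1/q)) :=
        mul_le_mul (h₂ n T) (h₁ n z') (by positivity)
          ((by positivity : (0:ℝ) ≤ _).trans (h₂ n T))
    _ = _ := by ring

/-- **Kwapień-type factorization, (v) ⇒ (i).**  Suppose `Z*` is isometrically identified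
(via `J`) with a closed subspace of `L(E*,F)` and `1/p + 1/q = 1/r ≤ 1`.  If `S : U → Z`
factors as `S = S₁ ∘ S₂` where `S₂ : U → W` is `(ℓ^s_p, ℓ_p)`-summing and the adjoint
`S₁* : Z* → W*` of `S₁ : W → Z` is `(ℓ^s_q, ℓ_q)`-summing, then `S` is
`(ℓ^s_p, ℓ^s_q)`-dominated. -/
theorem lpq_dominated_of_factorization
    {Z E F W : Type*}
    [NormedAddCommGroup Z] [NormedSpace ℝ Z] [CompleteSpace Z]
    [NormedAddCommGroup E] [NormedSpace ℝ E] [CompleteSpace E]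
    [NormedAddCommGroup F] [NormedSpace ℝ F] [CompleteSpace F]
    [NormedAddCommGroup W] [NormedSpace ℝ W] [CompleteSpace W]
    [CompleteSpace X] [CompleteSpace Y]
    (p q r : ℝ) (hp : 1 < p) (hq : 1 < q) (hpq : 1/p + 1/q ≤ 1)
    (hr : 1/r = 1/p + 1/q)
    (J : StrongDual ℝ Z →ₗᵢ[ℝ] (StrongDual ℝ E →L[ℝ] F))
    (U : Submodule ℝ (StrongDual ℝ X →L[ℝ] Y))
    (hUclosed : IsClosed (U : Set (StrongDual ℝ X →L[ℝ] Y)))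
    (S : U →L[ℝ] Z) (S₂ : U →L[ℝ] W) (S₁ : W →L[ℝ] Z)
    (hS₂ : IsLpSumming p U S₂)
    (hS₁ : ∃ K : ℝ, 0 ≤ K ∧ ∀ (n : ℕ) (z' : Fin n → StrongDual ℝ Z),
      (∑ i, ‖(z' i).comp S₁‖ ^ q) ^ (1/q) ≤
        K * ⨆ ψ : DualBall E, (∑ i, ‖evalBall (J (z' i)) ψ‖ ^ q) ^ (1/q))
    (hfact : ∀ T : U, S₁ (S₂ T) = S T) :
    ∃ K : ℝ, 0 ≤ K ∧ ∀ (n : ℕ) (T : Fin n → U) (z' : Fin n → StrongDual ℝ Z),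
      (∑ i, |z' i (S (T i))| ^ r) ^ (1/r) ≤
        K * (⨆ φ : DualBall X,
              (∑ i, ‖evalBall (T i : StrongDual ℝ X →L[ℝ] Y) φ‖ ^ p) ^ (1/p))
          * (⨆ ψ : DualBall E, (∑ i, ‖evalBall (J (z' i)) ψ‖ ^ q) ^ (1/q)) :=
  lpq_dominated_of_factorization_general p q r hp hq hr J U S S₂ S₁ hS₂ hS₁ hfact
end
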